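/- arXiv:1706.00229 — 4 statements merged into one kernel-verified Lean document; each statement's English description precedes it below -/
import Mathlib

section
/- Let u_k : [0,T] → ℝ^m be a sequence of absolutely continuous functions with u_k(0) = u₀ and Var_{[0,T]}(u_k) ≤ K for all k. Define σ_k(t) = t + Var_{[0,t]}(u_k), φ_{0_k} = σ_k⁻¹ extended by T on (T + V_k, S] where V_k = Var_{[0,T]}(u_k) and S = T + K, and φ_k = u_k ∘ φ_{0_k}. Then the pairs (φ_{0_k}, φ_k) are 1-Lipschitz on [0,S], and there exists a subsequence converging uniformly on [0,S] to a Lipschitz pair (φ₀, φ) satisfying φ₀'(s) + |φ'(s)| ≤ 1 for a.e. s. -/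
/-!
The arc length `σ t = t + Var_{[0,t]} u` is continuous, because its increments are dominated by
those of `∫ ‖u'‖`, and it satisfies `|t - t'| + ‖u t - u t'‖ ≤ |σ t - σ t'|`. Since
`σ (φ₀ s) = min s (σ T)`, the graph `s ↦ (φ₀ s, u (φ₀ s))` is `1`-Lipschitz for the `ℓ¹` metric
on `ℝ × ℝᵐ`. All graphs take values in the compact set `[0,T] × closedBall u₀ K`, so by
Arzelà–Ascoli a subsequence converges uniformly, to a `1`-Lipschitz limit; by Rademacher's theorem
the limit is differentiable a.e., with derivative of `ℓ¹` norm at most `1`.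
-/

open Set MeasureTheory Filter Topology

/-- Absolute continuity on `[a,b]` via the integral characterization. -/
def AbsCont {E : Type*} [NormedAddCommGroup E] [NormedSpace ℝ E] (f : ℝ → E) (a b : ℝ) : Prop :=
  ∃ f' : ℝ → E, IntervalIntegrable f' volume a b ∧
    ∀ t ∈ Set.Icc a b, f t = f a + ∫ τ in a..t, f' τ

open intervalIntegral
open scoped NNReal BoundedContinuousFunction

theorem eVariationOn_le_of_edist_le {α E F : Type*} [LinearOrder α] [PseudoEMetricSpace E]
    [PseudoEMetricSpace F] {f : α → E} {g : α → F} {s : Set α}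
    (h : ∀ x ∈ s, ∀ y ∈ s, edist (f x) (f y) ≤ edist (g x) (g y)) :
    eVariationOn f s ≤ eVariationOn g s :=
  iSup_mono fun p => Finset.sum_le_sum fun _ _ => h _ (p.2.2.2 _) _ (p.2.2.2 _)

theorem BoundedVariationOn.toReal_eVariationOn_Icc_sub {E : Type*} [PseudoEMetricSpace E]
    {f : ℝ → E} {a b x y : ℝ} (hf : BoundedVariationOn f (Icc a b)) (hx : a ≤ x) (hxy : x ≤ y)
    (hy : y ≤ b) :
    (eVariationOn f (Icc a y)).toReal - (eVariationOn f (Icc a x)).toReal =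
      (eVariationOn f (Icc x y)).toReal := by
  have hadd := eVariationOn.Icc_add_Icc f hx hxy (mem_univ x) (s := univ)
  simp only [univ_inter] at hadd
  rw [← hadd, ENNReal.toReal_add (hf.mono (Icc_subset_Icc le_rfl (hxy.trans hy)))
    (hf.mono (Icc_subset_Icc hx hy)), add_sub_cancel_left]

theorem continuousOn_of_dist_le_dist {α β γ : Type*} [PseudoMetricSpace α] [PseudoMetricSpace β]
    [PseudoMetricSpace γ] {f : α → β} {g : α → γ} {s : Set α} (hg : ContinuousOn g s)
    (h : ∀ x ∈ s, ∀ y ∈ s, dist (f x) (f y) ≤ dist (g x) (g y)) : ContinuousOn f s := by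
  intro x hx
  refine Metric.continuousWithinAt_iff.2 fun ε hε => ?_
  obtain ⟨δ, hδ, hgδ⟩ := Metric.continuousWithinAt_iff.1 (hg x hx) ε hε
  exact ⟨δ, hδ, fun {y} hy hyx => (h _ hy x hx).trans_lt (hgδ hy hyx)⟩

theorem eVariationOn_Icc_le_of_dist_le_sub {E : Type*} [PseudoMetricSpace E] {f : ℝ → E}
    {G : ℝ → ℝ} {a b c d : ℝ}
    (hG : ∀ x ∈ Icc a b, ∀ y ∈ Icc a b, x ≤ y → dist (f x) (f y) ≤ G y - G x)
    (hc : a ≤ c) (hcd : c ≤ d) (hd : d ≤ b) :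
    eVariationOn f (Icc c d) ≤ ENNReal.ofReal (G d - G c) := by
  have hsub : Icc c d ⊆ Icc a b := Icc_subset_Icc hc hd
  have hmono : MonotoneOn G (Icc c d) := fun x hx y hy hxy =>
    sub_nonneg.1 (dist_nonneg.trans (hG x (hsub hx) y (hsub hy) hxy))
  have hedist : ∀ x ∈ Icc c d, ∀ y ∈ Icc c d, edist (f x) (f y) ≤ edist (G x) (G y) := by
    intro x hx y hy
    wlog hxy : x ≤ y generalizing x y
    · rw [edist_comm, edist_comm (G x)]
      exact this y hy x hx (le_of_not_ge hxy)
    rw [edist_dist, edist_dist, Real.dist_eq, abs_sub_comm,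
      abs_of_nonneg (sub_nonneg.2 (hmono hx hy hxy))]
    exact ENNReal.ofReal_le_ofReal (hG x (hsub hx) y (hsub hy) hxy)
  calc eVariationOn f (Icc c d) ≤ eVariationOn G (Icc c d) := eVariationOn_le_of_edist_le hedist
    _ = ENNReal.ofReal (G d - G c) := by
      rw [← hmono.eVariationOn_eq ⟨le_rfl, hcd⟩ ⟨hcd, le_rfl⟩, inter_self]

noncomputable def arcLength {E : Type*} [PseudoEMetricSpace E] (u : ℝ → E) (t : ℝ) : ℝ :=
  t + (eVariationOn u (Icc 0 t)).toReal

namespace AbsCont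

variable {E : Type*} [NormedAddCommGroup E] [NormedSpace ℝ E] {f : ℝ → E} {a b : ℝ}

theorem exists_dist_le_sub (hf : AbsCont f a b) :
    ∃ G : ℝ → ℝ, ContinuousOn G (Icc a b) ∧
      ∀ x ∈ Icc a b, ∀ y ∈ Icc a b, x ≤ y → dist (f x) (f y) ≤ G y - G x := by
  obtain ⟨f', hf', hrep⟩ := hf
  have hint : ∀ x ∈ Icc a b, IntervalIntegrable f' volume a x := fun x hx =>
    hf'.mono_set (uIcc_subset_uIcc_left (uIcc_of_le (hx.1.trans hx.2) ▸ Icc_subset_uIcc hx))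
  refine ⟨fun t => ∫ τ in a..t, ‖f' τ‖,
    (continuousOn_primitive_interval' hf'.norm left_mem_uIcc).mono Icc_subset_uIcc,
    fun x hx y hy hxy => ?_⟩
  rw [dist_comm, dist_eq_norm, hrep x hx, hrep y hy, add_sub_add_left_eq_sub,
    integral_interval_sub_left (hint y hy) (hint x hx),
    integral_interval_sub_left (hint y hy).norm (hint x hx).norm]
  exact norm_integral_le_integral_norm hxy

theorem boundedVariationOn (hf : AbsCont f a b) : BoundedVariationOn f (Icc a b) := by
  obtain ⟨G, -, hG⟩ := hf.exists_dist_le_sub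
  rcases le_total a b with hab | hba
  · exact ne_top_of_le_ne_top ENNReal.ofReal_ne_top
      (eVariationOn_Icc_le_of_dist_le_sub hG le_rfl hab le_rfl)
  · exact BoundedVariationOn.of_subsingleton (subsingleton_Icc_of_ge hba)

theorem continuousOn_variation (hf : AbsCont f a b) :
    ContinuousOn (fun t => (eVariationOn f (Icc a t)).toReal) (Icc a b) := by
  obtain ⟨G, hGc, hG⟩ := hf.exists_dist_le_sub
  refine continuousOn_of_dist_le_dist hGc fun x hx y hy => ?_
  wlog hxy : x ≤ y generalizing x y
  · rw [dist_comm, dist_comm (G x)]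
    exact this y hy x hx (le_of_not_ge hxy)
  rw [dist_comm, Real.dist_eq, hf.boundedVariationOn.toReal_eVariationOn_Icc_sub hx.1 hxy hy.2,
    abs_of_nonneg ENNReal.toReal_nonneg, dist_comm, Real.dist_eq]
  exact (ENNReal.toReal_le_of_le_ofReal (dist_nonneg.trans (hG x hx y hy hxy))
    (eVariationOn_Icc_le_of_dist_le_sub hG hx.1 hxy hy.2)).trans (le_abs_self _)

theorem continuousOn_arcLength {T : ℝ} (hf : AbsCont f 0 T) :
    ContinuousOn (arcLength f) (Icc 0 T) :=
  continuousOn_id.add hf.continuousOn_variation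

end AbsCont

section ArcLength

variable {E : Type*} [PseudoMetricSpace E] {u : ℝ → E} {T : ℝ}

theorem arcLength_zero (u : ℝ → E) : arcLength u 0 = 0 := by
  simp [arcLength]

theorem sub_add_dist_le_arcLength_sub (hu : BoundedVariationOn u (Icc 0 T)) {t t' : ℝ}
    (ht : 0 ≤ t) (htt' : t ≤ t') (ht' : t' ≤ T) :
    t' - t + dist (u t) (u t') ≤ arcLength u t' - arcLength u t := by
  have hdist : dist (u t) (u t') ≤ (eVariationOn u (Icc t t')).toReal :=
    (hu.mono (Icc_subset_Icc ht ht')).dist_le ⟨le_rfl, htt'⟩ ⟨htt', le_rfl⟩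
  have hV := hu.toReal_eVariationOn_Icc_sub ht htt' ht'
  simp only [arcLength]
  linarith

theorem abs_sub_add_dist_le_abs_arcLength_sub (hu : BoundedVariationOn u (Icc 0 T)) {t t' : ℝ}
    (ht : t ∈ Icc 0 T) (ht' : t' ∈ Icc 0 T) :
    |t - t'| + dist (u t) (u t') ≤ |arcLength u t - arcLength u t'| := by
  wlog htt' : t ≤ t' generalizing t t'
  · rw [abs_sub_comm, dist_comm, abs_sub_comm (arcLength u t)]
    exact this ht' ht (le_of_not_ge htt')
  have h := sub_add_dist_le_arcLength_sub hu ht.1 htt' ht'.2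
  rw [abs_sub_comm, abs_of_nonneg (sub_nonneg.2 htt'), abs_sub_comm,
    abs_of_nonneg (by linarith [dist_nonneg (x := u t) (y := u t')])]
  exact h

variable {φ₀ : ℝ → ℝ} {S : ℝ}

theorem arcLength_comp_eq_min (hT : 0 ≤ T) (hσ : ContinuousOn (arcLength u) (Icc 0 T))
    (hinv : ∀ t ∈ Icc 0 T, φ₀ (arcLength u t) = t)
    (hext : ∀ s ∈ Icc (arcLength u T) S, φ₀ s = T) {s : ℝ} (hs : s ∈ Icc 0 S) :
    φ₀ s ∈ Icc 0 T ∧ arcLength u (φ₀ s) = min s (arcLength u T) := by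
  rcases le_total s (arcLength u T) with hsT | hTs
  · obtain ⟨t, ht, rfl⟩ : ∃ t ∈ Icc 0 T, arcLength u t = s :=
      intermediate_value_Icc hT hσ ⟨(arcLength_zero u).symm ▸ hs.1, hsT⟩
    rw [hinv t ht, min_eq_left hsT]
    exact ⟨ht, rfl⟩
  · rw [hext s ⟨hTs, hs.2⟩, min_eq_right hTs]
    exact ⟨⟨hT, le_rfl⟩, rfl⟩

theorem abs_sub_add_dist_le_of_leftInvOn_arcLength (hT : 0 ≤ T)
    (hu : BoundedVariationOn u (Icc 0 T)) (hσ : ContinuousOn (arcLength u) (Icc 0 T))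
    (hinv : ∀ t ∈ Icc 0 T, φ₀ (arcLength u t) = t)
    (hext : ∀ s ∈ Icc (arcLength u T) S, φ₀ s = T) {s s' : ℝ} (hs : s ∈ Icc 0 S)
    (hs' : s' ∈ Icc 0 S) :
    |φ₀ s - φ₀ s'| + dist (u (φ₀ s)) (u (φ₀ s')) ≤ |s - s'| := by
  obtain ⟨ht, hσt⟩ := arcLength_comp_eq_min hT hσ hinv hext hs
  obtain ⟨ht', hσt'⟩ := arcLength_comp_eq_min hT hσ hinv hext hs'
  calc |φ₀ s - φ₀ s'| + dist (u (φ₀ s)) (u (φ₀ s'))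
      ≤ |arcLength u (φ₀ s) - arcLength u (φ₀ s')| :=
        abs_sub_add_dist_le_abs_arcLength_sub hu ht ht'
    _ ≤ |s - s'| := by
        rw [hσt, hσt']
        simpa using abs_min_sub_min_le_max s (arcLength u T) s' (arcLength u T)

end ArcLength

theorem exists_subseq_tendstoUniformly_of_lipschitzWith {α β : Type*} [PseudoMetricSpace α]
    [CompactSpace α] [MetricSpace β] {K : ℝ≥0} {f : ℕ → α → β} {t : Set β} (ht : IsCompact t)
    (hf : ∀ n, LipschitzWith K (f n)) (hft : ∀ n x, f n x ∈ t) :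
    ∃ ι : ℕ → ℕ, StrictMono ι ∧ ∃ g : α → β, LipschitzWith K g ∧
      TendstoUniformly (fun j => f (ι j)) g atTop := by
  let F : ℕ → α →ᵇ β := fun n => .mkOfCompact ⟨f n, (hf n).continuous⟩
  have hequi : Equicontinuous ((↑) : range F → α → β) := by
    refine (LipschitzWith.uniformEquicontinuous _ K ?_).equicontinuous
    rintro ⟨_, n, rfl⟩
    exact hf n
  have hcpt : IsCompact (closure (range F)) :=
    BoundedContinuousFunction.arzela_ascoli t ht _ (by rintro _ x ⟨n, rfl⟩; exact hft n x) hequi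
  obtain ⟨g, -, ι, hι, hlim⟩ := hcpt.tendsto_subseq fun n => subset_closure (mem_range_self n)
  have hunif : TendstoUniformly (fun j => f (ι j)) g atTop :=
    BoundedContinuousFunction.tendsto_iff_tendstoUniformly.1 hlim
  refine ⟨ι, hι, g, ?_, hunif⟩
  exact (isClosed_setOfPred_lipschitzWith K).mem_of_tendsto
    (tendsto_pi_nhds.2 fun x => hunif.tendsto_at x) (Eventually.of_forall fun j => hf (ι j))

theorem exists_subseq_tendstoUniformlyOn_Icc_of_lipschitzOnWith {β : Type*} [MetricSpace β]
    {a b : ℝ} (hab : a ≤ b) {K : ℝ≥0} {f : ℕ → ℝ → β} {t : Set β} (ht : IsCompact t)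
    (hf : ∀ n, LipschitzOnWith K (f n) (Icc a b)) (hft : ∀ n, MapsTo (f n) (Icc a b) t) :
    ∃ ι : ℕ → ℕ, StrictMono ι ∧ ∃ g : ℝ → β, LipschitzWith K g ∧
      TendstoUniformlyOn (fun j => f (ι j)) g atTop (Icc a b) := by
  have : CompactSpace (Icc a b) := isCompact_iff_compactSpace.1 isCompact_Icc
  obtain ⟨ι, hι, g, hg, hlim⟩ := exists_subseq_tendstoUniformly_of_lipschitzWith ht
    (f := fun n (x : Icc a b) => f n x) (fun n => (hf n).to_restrict) (fun n x => hft n x.2)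
  refine ⟨ι, hι, g ∘ projIcc a b hab, by simpa using hg.comp (LipschitzWith.projIcc hab), ?_⟩
  rw [tendstoUniformlyOn_iff_tendstoUniformly_comp_coe]
  convert hlim using 1
  exact funext fun x => congrArg g (projIcc_val hab x)

theorem WithLp.prod_dist_eq_abs_add_norm {F : Type*} [SeminormedAddCommGroup F]
    (x y : WithLp 1 (ℝ × F)) : dist x y = |x.fst - y.fst| + ‖x.snd - y.snd‖ := by
  rw [WithLp.prod_dist_eq_of_L1, Real.dist_eq, dist_eq_norm]

theorem LipschitzWith.ae_hasDerivAt_fst_add_norm_snd_le_one {F : Type*} [NormedAddCommGroup F]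
    [NormedSpace ℝ F] [FiniteDimensional ℝ F] {Φ : ℝ → WithLp 1 (ℝ × F)}
    (hΦ : LipschitzWith 1 Φ) :
    ∀ᵐ s, ∃ d₀ : ℝ, ∃ d : F, HasDerivAt (fun s => (Φ s).fst) d₀ s ∧
      HasDerivAt (fun s => (Φ s).snd) d s ∧ d₀ + ‖d‖ ≤ 1 := by
  filter_upwards [hΦ.ae_differentiableAt_real] with s hs
  have hD := hs.hasDerivAt
  have hnorm : ‖deriv Φ s‖ ≤ 1 := by simpa using hD.le_of_lipschitz hΦ
  rw [WithLp.prod_norm_eq_of_L1, Real.norm_eq_abs] at hnorm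
  exact ⟨(deriv Φ s).fst, (deriv Φ s).snd,
    (WithLp.fstL 1 ℝ ℝ F).hasFDerivAt.comp_hasDerivAt s hD,
    (WithLp.sndL 1 ℝ ℝ F).hasFDerivAt.comp_hasDerivAt s hD,
    by linarith [le_abs_self (deriv Φ s).fst]⟩

/-- Arc-length reparametrizations of absolutely continuous inputs with equibounded
variation are 1-Lipschitz (in the graph ℓ¹ metric), and a subsequence converges
uniformly to a Lipschitz pair `(φ₀, φ)` with `φ₀' + |φ'| ≤ 1` a.e. (Ascoli–Arzelà). -/
theorem arc_length_compactness {m : ℕ} (T K : ℝ) (hT : 0 < T) (hK : 0 < K)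
    (u₀ : EuclideanSpace ℝ (Fin m)) (uk : ℕ → ℝ → EuclideanSpace ℝ (Fin m))
    (hAC : ∀ k, AbsCont (uk k) 0 T) (h0 : ∀ k, uk k 0 = u₀)
    (hvar : ∀ k, (eVariationOn (uk k) (Icc 0 T)).toReal ≤ K)
    (φ0k : ℕ → ℝ → ℝ)
    (hinv : ∀ k, ∀ t ∈ Icc (0:ℝ) T,
      φ0k k (t + (eVariationOn (uk k) (Icc 0 t)).toReal) = t)
    (hext : ∀ k, ∀ s ∈ Icc (T + (eVariationOn (uk k) (Icc 0 T)).toReal) (T + K),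
      φ0k k s = T)
    (hmaps : ∀ k, MapsTo (φ0k k) (Icc 0 (T + K)) (Icc 0 T)) :
    (∀ k, ∀ s ∈ Icc (0:ℝ) (T + K), ∀ s' ∈ Icc (0:ℝ) (T + K),
      |φ0k k s - φ0k k s'| + ‖uk k (φ0k k s) - uk k (φ0k k s')‖ ≤ |s - s'|) ∧
    ∃ ι : ℕ → ℕ, StrictMono ι ∧ ∃ φ₀ : ℝ → ℝ, ∃ φ : ℝ → EuclideanSpace ℝ (Fin m),
      TendstoUniformlyOn (fun j s => ((φ0k (ι j) s : ℝ), uk (ι j) (φ0k (ι j) s)))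
        (fun s => (φ₀ s, φ s)) atTop (Icc 0 (T + K)) ∧
      (∀ s ∈ Icc (0:ℝ) (T + K), ∀ s' ∈ Icc (0:ℝ) (T + K),
        |φ₀ s - φ₀ s'| + ‖φ s - φ s'‖ ≤ |s - s'|) ∧
      (∀ᵐ s ∂(volume.restrict (Icc (0:ℝ) (T + K))),
        ∃ d₀ : ℝ, ∃ d : EuclideanSpace ℝ (Fin m),
          HasDerivAt φ₀ d₀ s ∧ HasDerivAt φ d s ∧ d₀ + ‖d‖ ≤ 1) := by
  have hlip : ∀ k, ∀ s ∈ Icc (0:ℝ) (T + K), ∀ s' ∈ Icc (0:ℝ) (T + K),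
      |φ0k k s - φ0k k s'| + ‖uk k (φ0k k s) - uk k (φ0k k s')‖ ≤ |s - s'| :=
    fun k s hs s' hs' => by
      simpa only [dist_eq_norm] using abs_sub_add_dist_le_of_leftInvOn_arcLength hT.le
        (hAC k).boundedVariationOn (hAC k).continuousOn_arcLength (hinv k) (hext k) hs hs'
  refine ⟨hlip, ?_⟩
  -- In the `ℓ¹` product metric the graph bound `hlip` is exactly the `1`-Lipschitz property.
  let graph : ℕ → ℝ → WithLp 1 (ℝ × EuclideanSpace ℝ (Fin m)) :=
    fun k s => WithLp.toLp 1 (φ0k k s, uk k (φ0k k s))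
  have hgraph_lip : ∀ k, LipschitzOnWith 1 (graph k) (Icc 0 (T + K)) := fun k =>
    LipschitzOnWith.of_dist_le_mul fun s hs s' hs' => by
      rw [WithLp.prod_dist_eq_abs_add_norm, NNReal.coe_one, one_mul, Real.dist_eq]
      exact hlip k s hs s' hs'
  have hgraph_mem : ∀ k, MapsTo (graph k) (Icc 0 (T + K))
      (WithLp.toLp 1 '' (Icc 0 T ×ˢ Metric.closedBall u₀ K)) :=
    fun k s hs => mem_image_of_mem _ ⟨hmaps k hs, h0 k ▸ ((hAC k).boundedVariationOn.dist_le
      (hmaps k hs) ⟨le_rfl, hT.le⟩).trans (hvar k)⟩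
  obtain ⟨ι, hι, Φ, hΦ, hlim⟩ := exists_subseq_tendstoUniformlyOn_Icc_of_lipschitzOnWith
    (by linarith) ((isCompact_Icc.prod (isCompact_closedBall u₀ K)).image
      (WithLp.prod_continuous_toLp 1 _ _)) hgraph_lip hgraph_mem
  refine ⟨ι, hι, fun s => (Φ s).fst, fun s => (Φ s).snd,
    (WithLp.prod_uniformContinuous_ofLp 1 ℝ _).comp_tendstoUniformlyOn hlim, fun s _ s' _ => ?_,
    ae_restrict_of_ae hΦ.ae_hasDerivAt_fst_add_norm_snd_le_one⟩
  simpa [WithLp.prod_dist_eq_abs_add_norm, Real.dist_eq] using hΦ.dist_le_mul s s'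
end

section
/- Consider the control system in ℝ⁴: ẋ₁ = u̇₁, ẋ₂ = u̇₂, ẋ₃ = x₃(x₂ u̇₁ - x₁ u̇₂), ẋ₄ = v + x₄(x₁ u̇₂ - x₂ u̇₁), with initial condition x(0) = (0,0,1,0). For each k ≥ 1, define on [0, 2π] the controls u_k(t) = k^{-1/3}(cos(kt) - 1, sin(kt))·χ_{[2π/k, 2π]}(t) and v_k(t) = k e^{-2π k^{1/3}} χ_{[0, 2π/k]}(t). Then the corresponding Carathéodory solution x_k satisfies x_{4_k}(2π) = 2π e^{-k^{1/3}(sin(2πk)/k + 2π/k)} and in particular x_{4_k}(2π) → 2π as k → ∞, while u_k(t) → 0 for every t ∈ [0,2π] and ‖v_k‖_{L¹([0,2π])} → 0. -/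
/-!
Up to the switching time `τ = 2π/k` the controls `u` vanish, so `x₁ = x₂ = 0` and `x₄` grows
linearly under the constant `v`, reaching `x₄(τ) = τ · k e^{-2π k^{1/3}} = 2π e^{-2π k^{1/3}}`.
After `τ` the control `v` is off and `x₁ = u₁`, `x₂ = u₂`, so that
`x₁u̇₂ - x₂u̇₁ = k^{1/3}(1 - cos kt)` and `x₄` solves a scalar linear equation: `x₄ e^{-A}` is
constant for the primitive `A(t) = k^{1/3}(t - sin(kt)/k)`. Since `k^{1/3} · 2π/k → 0`,
`x₄(2π) → 2π`, whereas `|u_k| ≤ 2k^{-1/3}` and `‖v_k‖₁ = 2π e^{-2π k^{1/3}}`.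
-/

open Set MeasureTheory Filter Topology Real

lemma hasDerivWithinAt_comp_max_Ioi {F F' : ℝ → ℝ} (hF : ∀ x, HasDerivAt F (F' x) x)
    (τ s : ℝ) :
    HasDerivWithinAt (fun x => F (max x τ)) (if s < τ then 0 else F' s) (Ioi s) s := by
  split_ifs with h
  · refine (hasDerivWithinAt_const s _ (F τ)).congr_of_eventuallyEq ?_ (by rw [max_eq_right h.le])
    filter_upwards [nhdsWithin_le_nhds (Iio_mem_nhds h)] with x hx
    rw [max_eq_right hx.le]
  · refine (hF s).hasDerivWithinAt.congr (fun x hx => ?_) ?_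
    · rw [max_eq_left (le_trans (not_lt.1 h) (le_of_lt hx))]
    · rw [max_eq_left (not_lt.1 h)]

lemma integral_ite_lt_of_hasDerivAt {F F' : ℝ → ℝ} {τ t : ℝ}
    (hF : ∀ x, HasDerivAt F (F' x) x) (hF' : Continuous F') (hFτ : F τ = 0)
    (hτ : 0 ≤ τ) (ht : 0 ≤ t) :
    ∫ s in 0..t, (if s < τ then 0 else F' s) = if t < τ then 0 else F t := by
  have hFc : Continuous F := continuous_iff_continuousAt.2 fun x => (hF x).continuousAt
  have hind : (fun s => if s < τ then 0 else F' s) = (Ici τ).indicator F' := by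
    ext s
    simp only [indicator_apply, mem_Ici, ← not_lt]
    split_ifs <;> rfl
  have hint : IntervalIntegrable (fun s => if s < τ then 0 else F' s) volume 0 t := by
    rw [hind]
    exact (hF'.integrableOn_uIcc.indicator measurableSet_Ici).intervalIntegrable
  rw [intervalIntegral.integral_eq_sub_of_hasDeriv_right_of_le ht
    (hFc.comp (continuous_id.max continuous_const)).continuousOn
    (fun s _ => hasDerivWithinAt_comp_max_Ioi hF τ s) hint]
  split_ifs with h
  · simp [max_eq_right h.le, max_eq_right hτ, hFτ]
  · simp [max_eq_left (not_lt.1 h), max_eq_right hτ, hFτ]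

lemma eq_mul_exp_of_eq_add_integral {a b : ℝ} {x w A : ℝ → ℝ} (hab : a ≤ b)
    (hx : ContinuousOn x (Icc a b)) (hw : Continuous w) (hA : ∀ t, HasDerivAt A (w t) t)
    (h : ∀ t ∈ Icc a b, x t = x a + ∫ s in a..t, x s * w s) :
    x b = x a * exp (A b - A a) := by
  have hxw : ContinuousOn (fun s => x s * w s) (Icc a b) := hx.mul hw.continuousOn
  have hx' : ∀ t ∈ Ioo a b, HasDerivAt x (x t * w t) t := by
    intro t ht
    have hIcc : Icc a b ∈ 𝓝 t := Icc_mem_nhds ht.1 ht.2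
    have hint : IntervalIntegrable (fun s => x s * w s) volume a t :=
      (hxw.mono (Icc_subset_Icc_right ht.2.le)).intervalIntegrable_of_Icc ht.1.le
    have hd := intervalIntegral.integral_hasDerivAt_right hint
      ((hxw.mono Ioo_subset_Icc_self).stronglyMeasurableAtFilter isOpen_Ioo t ht)
      (hxw.continuousAt hIcc)
    refine (hd.const_add (x a)).congr_of_eventuallyEq ?_
    filter_upwards [hIcc] with s hs using h s hs
  have hconst : ∫ _ in a..b, (0:ℝ) = x b * exp (-A b) - x a * exp (-A a) := by
    refine intervalIntegral.integral_eq_sub_of_hasDerivAt_of_le hab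
      (hx.mul (continuous_iff_continuousAt.2 fun t => (hA t).continuousAt).neg.rexp.continuousOn)
      (fun t ht => ?_) intervalIntegrable_const
    refine ((hx' t ht).mul (hA t).neg.exp).congr_deriv ?_
    simp only [Pi.neg_apply]
    ring
  rw [intervalIntegral.integral_zero, eq_comm, sub_eq_zero] at hconst
  rw [sub_eq_neg_add, exp_add, ← mul_assoc, ← hconst, mul_assoc, ← exp_add]
  simp

noncomputable def controlU1 (κ t : ℝ) : ℝ :=
  if t < 2 * π / κ then 0 else κ ^ (-(1:ℝ)/3) * (cos (κ * t) - 1)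

noncomputable def controlU2 (κ t : ℝ) : ℝ :=
  if t < 2 * π / κ then 0 else κ ^ (-(1:ℝ)/3) * sin (κ * t)

noncomputable def controlDU1 (κ t : ℝ) : ℝ :=
  if t < 2 * π / κ then 0 else -(κ ^ ((2:ℝ)/3)) * sin (κ * t)

noncomputable def controlDU2 (κ t : ℝ) : ℝ :=
  if t < 2 * π / κ then 0 else κ ^ ((2:ℝ)/3) * cos (κ * t)

noncomputable def controlV (κ t : ℝ) : ℝ :=
  if t ≤ 2 * π / κ then κ * exp (-(2 * π) * κ ^ ((1:ℝ)/3)) else 0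

/-- The coefficient `x₁u̇₂ - x₂u̇₁` of `x₄` along the solution. -/
noncomputable def crossTerm (κ s : ℝ) : ℝ :=
  if s < 2 * π / κ then 0 else κ ^ ((1:ℝ)/3) * (1 - cos (κ * s))

section Controls

variable {κ : ℝ}

lemma rpow_neg_one_third_mul_self (hκ : 0 < κ) : κ ^ (-(1:ℝ)/3) * κ = κ ^ ((2:ℝ)/3) := by
  rw [← rpow_add_one hκ.ne']
  norm_num

lemma integral_controlDU1 (hκ : 0 < κ) {t : ℝ} (ht : 0 ≤ t) :
    ∫ s in 0..t, controlDU1 κ s = controlU1 κ t := by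
  refine integral_ite_lt_of_hasDerivAt (F := fun x => κ ^ (-(1:ℝ)/3) * (cos (κ * x) - 1))
    (fun x => ?_) (by fun_prop) ?_ (by positivity) ht
  · refine ((((hasDerivAt_id' x).const_mul κ).cos.sub_const 1).const_mul _).congr_deriv ?_
    rw [← rpow_neg_one_third_mul_self hκ]
    ring
  · simp [mul_div_cancel₀ _ hκ.ne']

lemma integral_controlDU2 (hκ : 0 < κ) {t : ℝ} (ht : 0 ≤ t) :
    ∫ s in 0..t, controlDU2 κ s = controlU2 κ t := by
  refine integral_ite_lt_of_hasDerivAt (F := fun x => κ ^ (-(1:ℝ)/3) * sin (κ * x))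
    (fun x => ?_) (by fun_prop) ?_ (by positivity) ht
  · refine (((hasDerivAt_id' x).const_mul κ).sin.const_mul _).congr_deriv ?_
    rw [← rpow_neg_one_third_mul_self hκ]
    ring
  · simp [mul_div_cancel₀ _ hκ.ne']

lemma controlU1_mul_controlDU2_sub (hκ : 0 < κ) (s : ℝ) :
    controlU1 κ s * controlDU2 κ s - controlU2 κ s * controlDU1 κ s = crossTerm κ s := by
  unfold controlU1 controlU2 controlDU1 controlDU2 crossTerm
  split_ifs
  · ring
  · have hc : κ ^ (-(1:ℝ)/3) * κ ^ ((2:ℝ)/3) = κ ^ ((1:ℝ)/3) := by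
      rw [← rpow_add hκ]
      norm_num
    linear_combination ((cos (κ * s) - 1) * cos (κ * s) + sin (κ * s) ^ 2) * hc
      + κ ^ ((1:ℝ)/3) * sin_sq_add_cos_sq (κ * s)

lemma mul_sub_mul_eq_crossTerm (hκ : 0 < κ) {x1 x2 : ℝ → ℝ}
    (hx1 : ∀ t ∈ Icc (0:ℝ) (2 * π), x1 t = ∫ s in 0..t, controlDU1 κ s)
    (hx2 : ∀ t ∈ Icc (0:ℝ) (2 * π), x2 t = ∫ s in 0..t, controlDU2 κ s)
    {s : ℝ} (hs : s ∈ Icc 0 (2 * π)) :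
    x1 s * controlDU2 κ s - x2 s * controlDU1 κ s = crossTerm κ s := by
  rw [hx1 s hs, hx2 s hs, integral_controlDU1 hκ hs.1, integral_controlDU2 hκ hs.1,
    controlU1_mul_controlDU2_sub hκ]

lemma crossTerm_of_le (hκ : 0 < κ) {s : ℝ} (hs : s ≤ 2 * π / κ) : crossTerm κ s = 0 := by
  unfold crossTerm
  rcases hs.lt_or_eq with h | rfl
  · rw [if_pos h]
  · rw [if_neg (lt_irrefl _), mul_div_cancel₀ _ hκ.ne', cos_two_pi, sub_self, mul_zero]

lemma abs_controlU1_le (hκ : 0 ≤ κ) (t : ℝ) : |controlU1 κ t| ≤ 2 * κ ^ (-(1:ℝ)/3) := by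
  have hc : 0 ≤ κ ^ (-(1:ℝ)/3) := rpow_nonneg hκ _
  unfold controlU1
  split_ifs
  · simpa using hc
  · rw [abs_mul, abs_of_nonneg hc, mul_comm]
    gcongr
    rw [abs_le]
    constructor <;> linarith [neg_one_le_cos (κ * t), cos_le_one (κ * t)]

lemma abs_controlU2_le (hκ : 0 ≤ κ) (t : ℝ) : |controlU2 κ t| ≤ κ ^ (-(1:ℝ)/3) := by
  have hc : 0 ≤ κ ^ (-(1:ℝ)/3) := rpow_nonneg hκ _
  unfold controlU2
  split_ifs
  · simpa using hc
  · rw [abs_mul, abs_of_nonneg hc]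
    exact mul_le_of_le_one_right hc (abs_sin_le_one _)

lemma integral_abs_controlV (hκ : 1 ≤ κ) :
    ∫ t in 0..2 * π, |controlV κ t| = 2 * π * exp (-(2 * π) * κ ^ ((1:ℝ)/3)) := by
  have hκ0 : 0 < κ := one_pos.trans_le hκ
  set τ := 2 * π / κ
  set m := κ * exp (-(2 * π) * κ ^ ((1:ℝ)/3))
  have hτ0 : 0 ≤ τ := by positivity
  have hτ2π : τ ≤ 2 * π := div_le_self two_pi_pos.le hκ
  have hind : (fun t => |controlV κ t|) = (Iic τ).indicator fun _ => m := by
    ext t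
    unfold controlV
    split_ifs with h
    · rw [indicator_of_mem (show t ∈ Iic τ from h), abs_of_nonneg (by positivity)]
    · rw [indicator_of_notMem (show t ∉ Iic τ from h), abs_zero]
  have hint : ∀ a b, IntervalIntegrable (fun t => |controlV κ t|) volume a b := fun a b => by
    rw [hind]
    exact ((integrableOn_const measure_Icc_lt_top.ne).indicator
      measurableSet_Iic).intervalIntegrable
  have hleft : ∫ t in 0..τ, (Iic τ).indicator (fun _ => m) t = τ * m := by
    rw [intervalIntegral.integral_congr (g := fun _ => m), intervalIntegral.integral_const,
      smul_eq_mul, sub_zero]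
    intro t ht
    exact indicator_of_mem (uIcc_of_le hτ0 ▸ ht).2 _
  have hright : ∫ t in τ..2 * π, (Iic τ).indicator (fun _ => m) t = 0 := by
    rw [intervalIntegral.integral_congr_ae (g := fun _ => 0), intervalIntegral.integral_zero]
    refine ae_of_all _ fun t ht => indicator_of_notMem ?_ _
    exact not_le.2 (uIoc_of_le hτ2π ▸ ht).1
  rw [← intervalIntegral.integral_add_adjacent_intervals (hint 0 τ) (hint τ (2 * π)), hind,
    hleft, hright, add_zero]
  simp only [m, τ]
  field_simp

end Controls

section State4

variable {κ : ℝ} {x4 g : ℝ → ℝ}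

lemma state4_at_switch_time (hκ : 1 ≤ κ)
    (hg : ∀ s ∈ Icc 0 (2 * π), g s = controlV κ s + x4 s * crossTerm κ s)
    (hx4 : ∀ t ∈ Icc (0:ℝ) (2 * π), x4 t = ∫ s in 0..t, g s) :
    x4 (2 * π / κ) = 2 * π * exp (-(2 * π) * κ ^ ((1:ℝ)/3)) := by
  have hκ0 : 0 < κ := one_pos.trans_le hκ
  have hτ0 : 0 ≤ 2 * π / κ := by positivity
  have hτ2π : 2 * π / κ ≤ 2 * π := div_le_self two_pi_pos.le hκ
  rw [hx4 _ ⟨hτ0, hτ2π⟩,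
    intervalIntegral.integral_congr (g := fun _ => κ * exp (-(2 * π) * κ ^ ((1:ℝ)/3))),
    intervalIntegral.integral_const, smul_eq_mul, sub_zero, ← mul_assoc,
    div_mul_cancel₀ _ hκ0.ne']
  intro s hs
  rw [uIcc_of_le hτ0] at hs
  rw [hg s ⟨hs.1, hs.2.trans hτ2π⟩, controlV, if_pos hs.2, crossTerm_of_le hκ0 hs.2,
    mul_zero, add_zero]

lemma state4_eq_add_integral (hκ : 1 ≤ κ)
    (hg : ∀ s ∈ Icc 0 (2 * π), g s = controlV κ s + x4 s * crossTerm κ s)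
    (hgi : IntervalIntegrable g volume 0 (2 * π))
    (hx4 : ∀ t ∈ Icc (0:ℝ) (2 * π), x4 t = ∫ s in 0..t, g s)
    {t : ℝ} (ht : t ∈ Icc (2 * π / κ) (2 * π)) :
    x4 t = x4 (2 * π / κ) +
      ∫ s in 2 * π / κ..t, x4 s * (κ ^ ((1:ℝ)/3) * (1 - cos (κ * s))) := by
  have hτ : 2 * π / κ ∈ Icc 0 (2 * π) := ⟨by positivity, div_le_self two_pi_pos.le hκ⟩
  have ht' : t ∈ Icc 0 (2 * π) := ⟨hτ.1.trans ht.1, ht.2⟩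
  rw [hx4 t ht', hx4 _ hτ, ← sub_eq_iff_eq_add', intervalIntegral.integral_interval_sub_left
    (hgi.mono_set (uIcc_subset_uIcc_left (Icc_subset_uIcc ht')))
    (hgi.mono_set (uIcc_subset_uIcc_left (Icc_subset_uIcc hτ)))]
  refine intervalIntegral.integral_congr_ae (ae_of_all _ fun s hs => ?_)
  rw [uIoc_of_le ht.1] at hs
  rw [hg s ⟨hτ.1.trans hs.1.le, hs.2.trans ht.2⟩, controlV, crossTerm, if_neg (not_le.2 hs.1),
    if_neg (not_lt.2 hs.1.le), zero_add]

lemma state4_two_pi (hκ : 1 ≤ κ)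
    (hg : ∀ s ∈ Icc 0 (2 * π), g s = controlV κ s + x4 s * crossTerm κ s)
    (hgi : IntervalIntegrable g volume 0 (2 * π)) (hx4c : ContinuousOn x4 (Icc 0 (2 * π)))
    (hx4 : ∀ t ∈ Icc (0:ℝ) (2 * π), x4 t = ∫ s in 0..t, g s) :
    x4 (2 * π) = 2 * π * exp (-(κ ^ ((1:ℝ)/3)) * (sin (2 * π * κ) / κ + 2 * π / κ)) := by
  have hκ0 : 0 < κ := one_pos.trans_le hκ
  have hA : ∀ s, HasDerivAt (fun s => κ ^ ((1:ℝ)/3) * (s - sin (κ * s) / κ))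
      (κ ^ ((1:ℝ)/3) * (1 - cos (κ * s))) s := by
    intro s
    refine (((hasDerivAt_id' s).sub (((hasDerivAt_id' s).const_mul κ).sin.div_const κ)).const_mul
      _).congr_deriv ?_
    field_simp
  rw [eq_mul_exp_of_eq_add_integral (div_le_self two_pi_pos.le hκ)
    (hx4c.mono (Icc_subset_Icc_left (by positivity))) (by fun_prop) hA
    (fun t ht => state4_eq_add_integral hκ hg hgi hx4 ht), state4_at_switch_time hκ hg hx4,
    mul_div_cancel₀ _ hκ0.ne', sin_two_pi, mul_assoc, ← exp_add, mul_comm κ]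
  ring_nf

end State4

lemma tendsto_natCast_rpow_neg_atTop {p : ℝ} (hp : 0 < p) :
    Tendsto (fun k : ℕ => (k : ℝ) ^ (-p)) atTop (𝓝 0) :=
  (tendsto_rpow_neg_atTop hp).comp tendsto_natCast_atTop_atTop

lemma tendsto_state4_closed_form :
    Tendsto (fun k : ℕ =>
      2 * π * exp (-((k : ℝ) ^ ((1:ℝ)/3)) * (sin (2 * π * k) / k + 2 * π / k)))
      atTop (𝓝 (2 * π)) := by
  have hlim : Tendsto (fun k : ℕ => 2 * π * exp (-(2 * π) * (k : ℝ) ^ (-((2:ℝ)/3))))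
      atTop (𝓝 (2 * π * exp (-(2 * π) * 0))) :=
    ((tendsto_natCast_rpow_neg_atTop (by norm_num)).const_mul _).rexp.const_mul _
  rw [mul_zero, exp_zero, mul_one] at hlim
  refine hlim.congr' ?_
  filter_upwards [eventually_ge_atTop 1] with k hk
  have hk0 : (k : ℝ) ≠ 0 := by positivity
  rw [show 2 * π * (k : ℝ) = k * (2 * π) by ring, sin_periodic.nat_mul_eq, sin_zero, zero_div,
    zero_add, show -((2:ℝ)/3) = 1/3 - 1 by norm_num, rpow_sub_one hk0]
  ring_nf

lemma tendsto_controlU (t : ℝ) :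
    Tendsto (fun k : ℕ => (controlU1 k t, controlU2 k t)) atTop (𝓝 (0, 0)) := by
  have hlim : Tendsto (fun k : ℕ => (k : ℝ) ^ (-(1:ℝ)/3)) atTop (𝓝 0) := by
    simpa only [neg_div] using tendsto_natCast_rpow_neg_atTop (p := 1/3) (by norm_num)
  refine .prodMk_nhds ?_ ?_
  · refine squeeze_zero_norm (fun k => abs_controlU1_le k.cast_nonneg t) ?_
    simpa using hlim.const_mul 2
  · exact squeeze_zero_norm (fun k => abs_controlU2_le k.cast_nonneg t) hlim

lemma tendsto_integral_abs_controlV :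
    Tendsto (fun k : ℕ => ∫ t in 0..2 * π, |controlV k t|) atTop (𝓝 0) := by
  have hpow : Tendsto (fun k : ℕ => 2 * π * (k : ℝ) ^ ((1:ℝ)/3)) atTop atTop :=
    ((tendsto_rpow_atTop (by norm_num)).comp tendsto_natCast_atTop_atTop).const_mul_atTop
      two_pi_pos
  have hlim : Tendsto (fun k : ℕ => 2 * π * exp (-(2 * π) * (k : ℝ) ^ ((1:ℝ)/3)))
      atTop (𝓝 0) := by
    simpa [Function.comp_def, neg_mul] using
      (tendsto_exp_neg_atTop_nhds_zero.comp hpow).const_mul (2 * π)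
  refine hlim.congr' ?_
  filter_upwards [eventually_ge_atTop 1] with k hk
  exact (integral_abs_controlV (Nat.one_le_cast.2 hk)).symm

theorem impulsive_example_general
    (u1 u2 du1 du2 v x1 x2 x4 : ℕ → ℝ → ℝ)
    (hu1 : ∀ (k : ℕ) (t : ℝ), u1 k t =
      if t < 2 * π / k then 0 else (k : ℝ) ^ (-(1:ℝ)/3) * (Real.cos (k * t) - 1))
    (hu2 : ∀ (k : ℕ) (t : ℝ), u2 k t =
      if t < 2 * π / k then 0 else (k : ℝ) ^ (-(1:ℝ)/3) * Real.sin (k * t))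
    (hdu1 : ∀ (k : ℕ) (t : ℝ), du1 k t =
      if t < 2 * π / k then 0 else -((k : ℝ) ^ ((2:ℝ)/3)) * Real.sin (k * t))
    (hdu2 : ∀ (k : ℕ) (t : ℝ), du2 k t =
      if t < 2 * π / k then 0 else (k : ℝ) ^ ((2:ℝ)/3) * Real.cos (k * t))
    (hv : ∀ (k : ℕ) (t : ℝ), v k t =
      if t ≤ 2 * π / k then (k : ℝ) * Real.exp (-(2 * π) * (k : ℝ) ^ ((1:ℝ)/3)) else 0)
    (hx1 : ∀ k : ℕ, 1 ≤ k → ∀ t ∈ Icc (0:ℝ) (2 * π),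
      x1 k t = ∫ s in (0:ℝ)..t, du1 k s)
    (hx2 : ∀ k : ℕ, 1 ≤ k → ∀ t ∈ Icc (0:ℝ) (2 * π),
      x2 k t = ∫ s in (0:ℝ)..t, du2 k s)
    (hx4c : ∀ k : ℕ, 1 ≤ k → ContinuousOn (x4 k) (Icc (0:ℝ) (2 * π)))
    (hx4i : ∀ k : ℕ, 1 ≤ k → IntervalIntegrable
      (fun s => v k s + x4 k s * (x1 k s * du2 k s - x2 k s * du1 k s)) volume 0 (2 * π))
    (hx4 : ∀ k : ℕ, 1 ≤ k → ∀ t ∈ Icc (0:ℝ) (2 * π),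
      x4 k t = ∫ s in (0:ℝ)..t, (v k s + x4 k s * (x1 k s * du2 k s - x2 k s * du1 k s))) :
    (∀ k : ℕ, 1 ≤ k → x4 k (2 * π) =
      2 * π * Real.exp (-((k : ℝ) ^ ((1:ℝ)/3)) * (Real.sin (2 * π * k) / k + 2 * π / k))) ∧
    Tendsto (fun k : ℕ => x4 k (2 * π)) atTop (𝓝 (2 * π)) ∧
    (∀ t ∈ Icc (0:ℝ) (2 * π),
      Tendsto (fun k : ℕ => (u1 k t, u2 k t)) atTop (𝓝 ((0 : ℝ), (0 : ℝ)))) ∧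
    Tendsto (fun k : ℕ => ∫ t in (0:ℝ)..(2 * π), |v k t|) atTop (𝓝 0) := by
  obtain rfl : u1 = fun k : ℕ => controlU1 k := funext fun k => funext (hu1 k)
  obtain rfl : u2 = fun k : ℕ => controlU2 k := funext fun k => funext (hu2 k)
  obtain rfl : du1 = fun k : ℕ => controlDU1 k := funext fun k => funext (hdu1 k)
  obtain rfl : du2 = fun k : ℕ => controlDU2 k := funext fun k => funext (hdu2 k)
  obtain rfl : v = fun k : ℕ => controlV k := funext fun k => funext (hv k)
  have hx4_eq : ∀ k : ℕ, 1 ≤ k → x4 k (2 * π) =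
      2 * π * exp (-((k : ℝ) ^ ((1:ℝ)/3)) * (sin (2 * π * k) / k + 2 * π / k)) :=
    fun k hk => state4_two_pi (Nat.one_le_cast.2 hk)
      (fun s hs => by rw [mul_sub_mul_eq_crossTerm (by positivity) (hx1 k hk) (hx2 k hk) hs])
      (hx4i k hk) (hx4c k hk) (hx4 k hk)
  refine ⟨hx4_eq, tendsto_state4_closed_form.congr' ?_, fun t _ => tendsto_controlU t,
    tendsto_integral_abs_controlV⟩
  filter_upwards [eventually_ge_atTop 1] with k hk using (hx4_eq k hk).symm

/-- Example 2.1 of the paper: for the impulsive system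
`ẋ₁ = u̇₁, ẋ₂ = u̇₂, ẋ₃ = x₃(x₂u̇₁ - x₁u̇₂), ẋ₄ = v + x₄(x₁u̇₂ - x₂u̇₁)` with
`x(0) = (0,0,1,0)` and the controls `u_k, v_k` below, one has
`x₄ₖ(2π) = 2π e^{-k^{1/3}(sin(2πk)/k + 2π/k)} → 2π`, while `u_k → 0` pointwise and
`‖v_k‖_{L¹} → 0`. -/
theorem impulsive_example
    (u1 u2 du1 du2 v x1 x2 x3 x4 : ℕ → ℝ → ℝ)
    (hu1 : ∀ (k : ℕ) (t : ℝ), u1 k t =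
      if t < 2 * π / k then 0 else (k : ℝ) ^ (-(1:ℝ)/3) * (Real.cos (k * t) - 1))
    (hu2 : ∀ (k : ℕ) (t : ℝ), u2 k t =
      if t < 2 * π / k then 0 else (k : ℝ) ^ (-(1:ℝ)/3) * Real.sin (k * t))
    (hdu1 : ∀ (k : ℕ) (t : ℝ), du1 k t =
      if t < 2 * π / k then 0 else -((k : ℝ) ^ ((2:ℝ)/3)) * Real.sin (k * t))
    (hdu2 : ∀ (k : ℕ) (t : ℝ), du2 k t =
      if t < 2 * π / k then 0 else (k : ℝ) ^ ((2:ℝ)/3) * Real.cos (k * t))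
    (hv : ∀ (k : ℕ) (t : ℝ), v k t =
      if t ≤ 2 * π / k then (k : ℝ) * Real.exp (-(2 * π) * (k : ℝ) ^ ((1:ℝ)/3)) else 0)
    (hx1 : ∀ k : ℕ, 1 ≤ k → ∀ t ∈ Icc (0:ℝ) (2 * π),
      x1 k t = ∫ s in (0:ℝ)..t, du1 k s)
    (hx2 : ∀ k : ℕ, 1 ≤ k → ∀ t ∈ Icc (0:ℝ) (2 * π),
      x2 k t = ∫ s in (0:ℝ)..t, du2 k s)
    (hx3c : ∀ k : ℕ, 1 ≤ k → ContinuousOn (x3 k) (Icc (0:ℝ) (2 * π)))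
    (hx3i : ∀ k : ℕ, 1 ≤ k → IntervalIntegrable
      (fun s => x3 k s * (x2 k s * du1 k s - x1 k s * du2 k s)) volume 0 (2 * π))
    (hx3 : ∀ k : ℕ, 1 ≤ k → ∀ t ∈ Icc (0:ℝ) (2 * π),
      x3 k t = 1 + ∫ s in (0:ℝ)..t, x3 k s * (x2 k s * du1 k s - x1 k s * du2 k s))
    (hx4c : ∀ k : ℕ, 1 ≤ k → ContinuousOn (x4 k) (Icc (0:ℝ) (2 * π)))
    (hx4i : ∀ k : ℕ, 1 ≤ k → IntervalIntegrable
      (fun s => v k s + x4 k s * (x1 k s * du2 k s - x2 k s * du1 k s)) volume 0 (2 * π))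
    (hx4 : ∀ k : ℕ, 1 ≤ k → ∀ t ∈ Icc (0:ℝ) (2 * π),
      x4 k t = ∫ s in (0:ℝ)..t, (v k s + x4 k s * (x1 k s * du2 k s - x2 k s * du1 k s))) :
    (∀ k : ℕ, 1 ≤ k → x4 k (2 * π) =
      2 * π * Real.exp (-((k : ℝ) ^ ((1:ℝ)/3)) * (Real.sin (2 * π * k) / k + 2 * π / k))) ∧
    Tendsto (fun k : ℕ => x4 k (2 * π)) atTop (𝓝 (2 * π)) ∧
    (∀ t ∈ Icc (0:ℝ) (2 * π),
      Tendsto (fun k : ℕ => (u1 k t, u2 k t)) atTop (𝓝 ((0 : ℝ), (0 : ℝ)))) ∧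
    Tendsto (fun k : ℕ => ∫ t in (0:ℝ)..(2 * π), |v k t|) atTop (𝓝 0) :=
  impulsive_example_general u1 u2 du1 du2 v x1 x2 x4 hu1 hu2 hdu1 hdu2 hv hx1 hx2 hx4c hx4i hx4
end

section
/- Let ψ : [0,S] → ℝ^l be bounded and Borel measurable, σ : [0,T] → [0,S] strictly increasing and surjective, σ_k : [0,T] → [0,S] absolutely continuous, strictly increasing, surjective with σ̇_k ≥ 1 a.e. and σ_k(t) → σ(t) for all t ∈ [0,T], and σ_k(T) = S. Then for every ε > 0 there exists a bounded continuous ψ̃ : [0,S] → ℝ^l with ∫₀^S |ψ̃ - ψ| ds < ε such that limsup_k ∫₀ᵀ |ψ(σ_k(t)) - ψ(σ(t))| dt ≤ 2ε; consequently ∫₀ᵀ |ψ(σ_k(t)) - ψ(σ(t))| dt → 0 as k → ∞. -/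
open Set MeasureTheory Filter Topology

lemma clock_aux_clamp_lip (S : ℝ) : LipschitzWith 1 (fun x : ℝ => max 0 (min x S)) := by
  apply LipschitzWith.of_dist_le_mul
  intro x y
  simp only [NNReal.coe_one, one_mul, Real.dist_eq]
  calc |max 0 (min x S) - max 0 (min y S)|
      = |max (min x S) 0 - max (min y S) 0| := by rw [max_comm, max_comm (min y S)]
    _ ≤ |min x S - min y S| := abs_max_sub_max_le_abs _ _ _
    _ ≤ max |x - y| |S - S| := abs_min_sub_min_le_max _ _ _ _
    _ ≤ |x - y| := by simp

lemma clock_aux_map_le (T S : ℝ) (hS : 0 ≤ S) (φ : ℝ → ℝ) (hm : Measurable φ)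
    (hmaps : MapsTo φ (Icc 0 T) (Icc 0 S))
    (hsurj : SurjOn φ (Icc 0 T) (Icc 0 S))
    (hexp : ∀ t₁ ∈ Icc (0:ℝ) T, ∀ t₂ ∈ Icc (0:ℝ) T, t₁ ≤ t₂ → t₂ - t₁ ≤ φ t₂ - φ t₁) :
    Measure.map φ (volume.restrict (Icc 0 T)) ≤ volume.restrict (Icc 0 S) := by
  classical
  obtain ⟨τ, hτ⟩ : ∃ τ : ℝ → ℝ, ∀ u ∈ Icc (0:ℝ) S, τ u ∈ Icc 0 T ∧ φ (τ u) = u := by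
    choose! τ h1 h2 using fun u (hu : u ∈ Icc (0:ℝ) S) => hsurj hu
    exact ⟨τ, fun u hu => ⟨h1 u hu, h2 u hu⟩⟩
  have hinj : ∀ t₁ ∈ Icc (0:ℝ) T, ∀ t₂ ∈ Icc (0:ℝ) T, φ t₁ = φ t₂ → t₁ = t₂ := by
    intro t₁ h₁ t₂ h₂ he
    rcases le_total t₁ t₂ with h | h
    · have := hexp t₁ h₁ t₂ h₂ h; linarith
    · have := hexp t₂ h₂ t₁ h₁ h; linarith
  have hτlip : ∀ u ∈ Icc (0:ℝ) S, ∀ v ∈ Icc (0:ℝ) S, v ≤ u → τ v ≤ τ u ∧ τ u - τ v ≤ u - v := by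
    intro u hu v hv hvu
    obtain ⟨hu1, hu2⟩ := hτ u hu
    obtain ⟨hv1, hv2⟩ := hτ v hv
    have hle : τ v ≤ τ u := by
      by_contra h
      push_neg at h
      have := hexp (τ u) hu1 (τ v) hv1 h.le
      rw [hu2, hv2] at this
      linarith
    refine ⟨hle, ?_⟩
    have := hexp (τ v) hv1 (τ u) hu1 hle
    rw [hu2, hv2] at this
    linarith
  set g : ℝ → ℝ := fun x => τ (max 0 (min x S)) with hg_def
  have hmem : ∀ x : ℝ, max 0 (min x S) ∈ Icc (0:ℝ) S :=
    fun x => ⟨le_max_left _ _, max_le hS (min_le_right _ _)⟩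
  have hglip : LipschitzWith 1 g := by
    apply LipschitzWith.of_dist_le_mul
    intro x y
    simp only [NNReal.coe_one, one_mul, Real.dist_eq, hg_def]
    set x' := max 0 (min x S) with hx'd
    set y' := max 0 (min y S) with hy'd
    have h1 : |τ x' - τ y'| ≤ |x' - y'| := by
      rcases le_total y' x' with h | h
      · obtain ⟨ha, hb⟩ := hτlip x' (hmem x) y' (hmem y) h
        rw [abs_of_nonneg (by linarith), abs_of_nonneg (by linarith)]
        exact hb
      · obtain ⟨ha, hb⟩ := hτlip y' (hmem y) x' (hmem x) h
        rw [abs_sub_comm, abs_sub_comm x' y', abs_of_nonneg (by linarith),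
          abs_of_nonneg (by linarith)]
        exact hb
    refine h1.trans ?_
    have := (clock_aux_clamp_lip S).dist_le_mul x y
    simpa [Real.dist_eq, hx'd, hy'd] using this
  rw [Measure.le_iff]
  intro s hs
  rw [Measure.map_apply hm hs, Measure.restrict_apply (hm hs), Measure.restrict_apply hs]
  have hsub : φ ⁻¹' s ∩ Icc 0 T ⊆ g '' (s ∩ Icc 0 S) := by
    rintro t ⟨hts, htI⟩
    have hφt : φ t ∈ Icc (0:ℝ) S := hmaps htI
    refine ⟨φ t, ⟨hts, hφt⟩, ?_⟩
    have hcl : max 0 (min (φ t) S) = φ t := by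
      rw [min_eq_left hφt.2, max_eq_right hφt.1]
    simp only [hg_def, hcl]
    exact hinj _ (hτ _ hφt).1 _ htI (hτ _ hφt).2
  refine (measure_mono hsub).trans ?_
  have := hglip.hausdorffMeasure_image_le (d := 1) (by norm_num) (s ∩ Icc 0 S)
  rw [MeasureTheory.hausdorffMeasure_real] at this
  simpa using this

/-- Three-term splitting: for bounded Borel `ψ` and clocks `σ_k → σ` pointwise with
`σ̇_k ≥ 1` a.e., for every `ε > 0` there is a bounded continuous `ψ̃` that is
`ε`-close to `ψ` in `L¹([0,S])` and for which
`limsup_k ∫₀ᵀ |ψ(σ_k(t)) - ψ(σ(t))| dt ≤ 2ε`; consequently the integrals tend to `0`. -/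
theorem clock_composition_L1_convergence {l : ℕ} (T S : ℝ) (hT : 0 < T) (hS : 0 < S)
    (ψ : ℝ → EuclideanSpace ℝ (Fin l)) (hψm : Measurable ψ)
    (Cb : ℝ) (hψb : ∀ s, ‖ψ s‖ ≤ Cb)
    (σ : ℝ → ℝ) (hσmono : StrictMonoOn σ (Icc 0 T))
    (hσsurj : SurjOn σ (Icc 0 T) (Icc 0 S)) (hσmaps : MapsTo σ (Icc 0 T) (Icc 0 S))
    (σk : ℕ → ℝ → ℝ)
    (hσkAC : ∀ k, ∃ a : ℝ → ℝ, IntervalIntegrable a volume 0 T ∧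
      (∀ᵐ t ∂(volume.restrict (Icc (0:ℝ) T)), 1 ≤ a t) ∧
      ∀ t ∈ Icc (0:ℝ) T, σk k t = ∫ τ in (0:ℝ)..t, a τ)
    (hσkmono : ∀ k, StrictMonoOn (σk k) (Icc 0 T))
    (hσksurj : ∀ k, SurjOn (σk k) (Icc 0 T) (Icc 0 S))
    (hσkmaps : ∀ k, MapsTo (σk k) (Icc 0 T) (Icc 0 S))
    (hσkT : ∀ k, σk k T = S)
    (hconv : ∀ t ∈ Icc (0:ℝ) T, Tendsto (fun k => σk k t) atTop (𝓝 (σ t))) :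
    (∀ ε > (0:ℝ), ∃ w : ℝ → EuclideanSpace ℝ (Fin l), Continuous w ∧
      (∃ C, ∀ s, ‖w s‖ ≤ C) ∧
      (∫ s in (0:ℝ)..S, ‖w s - ψ s‖) < ε ∧
      Filter.limsup (fun k => ∫ t in (0:ℝ)..T, ‖ψ (σk k t) - ψ (σ t)‖) atTop ≤ 2 * ε) ∧
    Tendsto (fun k => ∫ t in (0:ℝ)..T, ‖ψ (σk k t) - ψ (σ t)‖) atTop (𝓝 0) := by
  classical
  -- clamped versions
  set clampT : ℝ → ℝ := fun t => max 0 (min t T) with hclampT_def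
  have hclampT_mem : ∀ t, clampT t ∈ Icc (0:ℝ) T :=
    fun t => ⟨le_max_left _ _, max_le hT.le (min_le_right _ _)⟩
  have hclampT_mono : Monotone clampT :=
    fun x y h => max_le_max le_rfl (min_le_min h le_rfl)
  have hclampT_eq : ∀ t ∈ Icc (0:ℝ) T, clampT t = t := by
    intro t ht
    simp only [hclampT_def]
    rw [min_eq_left ht.2, max_eq_right ht.1]
  set σb : ℝ → ℝ := fun t => σ (clampT t) with hσb_def
  set σkb : ℕ → ℝ → ℝ := fun k t => σk k (clampT t) with hσkb_def
  have hσb_eq : ∀ t ∈ Icc (0:ℝ) T, σb t = σ t := fun t ht => by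
    simp only [hσb_def, hclampT_eq t ht]
  have hσkb_eq : ∀ k, ∀ t ∈ Icc (0:ℝ) T, σkb k t = σk k t := fun k t ht => by
    simp only [hσkb_def, hclampT_eq t ht]
  have hσb_meas : Measurable σb := by
    have : Monotone σb := fun x y h =>
      hσmono.monotoneOn (hclampT_mem x) (hclampT_mem y) (hclampT_mono h)
    exact this.measurable
  have hσkb_meas : ∀ k, Measurable (σkb k) := by
    intro k
    have : Monotone (σkb k) := fun x y h =>
      (hσkmono k).monotoneOn (hclampT_mem x) (hclampT_mem y) (hclampT_mono h)
    exact this.measurable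
  -- expansion
  have hexpk : ∀ k, ∀ t₁ ∈ Icc (0:ℝ) T, ∀ t₂ ∈ Icc (0:ℝ) T, t₁ ≤ t₂ →
      t₂ - t₁ ≤ σk k t₂ - σk k t₁ := by
    intro k t₁ h₁ t₂ h₂ h12
    obtain ⟨a, haint, hage, haeq⟩ := hσkAC k
    rw [haeq t₁ h₁, haeq t₂ h₂]
    have hmono : ∀ t ∈ Icc (0:ℝ) T, IntervalIntegrable a volume 0 t := by
      intro t ht
      refine haint.mono_set ?_
      rw [uIcc_of_le ht.1, uIcc_of_le (ht.1.trans ht.2)]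
      exact Icc_subset_Icc le_rfl ht.2
    have hsub : ((∫ τ in (0:ℝ)..t₂, a τ) - ∫ τ in (0:ℝ)..t₁, a τ) = ∫ τ in t₁..t₂, a τ :=
      intervalIntegral.integral_interval_sub_left (hmono t₂ h₂) (hmono t₁ h₁)
    have hone : t₂ - t₁ ≤ ∫ τ in t₁..t₂, a τ := by
      have hi12 : IntervalIntegrable a volume t₁ t₂ := by
        refine haint.mono_set ?_
        rw [uIcc_of_le h12, uIcc_of_le hT.le]
        exact Icc_subset_Icc h₁.1 h₂.2
      have hae : (fun _ : ℝ => (1:ℝ)) ≤ᵐ[volume.restrict (Icc t₁ t₂)] a :=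
        ae_restrict_of_ae_restrict_of_subset (Icc_subset_Icc h₁.1 h₂.2) hage
      have := intervalIntegral.integral_mono_ae_restrict h12
        (intervalIntegrable_const (c := (1:ℝ))) hi12 hae
      simpa using this
    linarith
  -- measures
  set μT : Measure ℝ := volume.restrict (Icc (0:ℝ) T) with hμT_def
  haveI : IsFiniteMeasure μT := by
    constructor
    simp only [hμT_def, Measure.restrict_apply_univ, Real.volume_Icc]
    exact ENNReal.ofReal_lt_top
  set ν : Measure ℝ := Measure.map σb μT with hν_def
  haveI hνfin : IsFiniteMeasure ν := by
    constructor
    rw [hν_def, Measure.map_apply hσb_meas MeasurableSet.univ]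
    simp only [preimage_univ]
    exact measure_lt_top μT univ
  set m : Measure ℝ := volume.restrict (Icc (0:ℝ) S) + ν with hm_def
  haveI : IsFiniteMeasure (volume.restrict (Icc (0:ℝ) S)) := by
    constructor
    simp only [Measure.restrict_apply_univ, Real.volume_Icc]
    exact ENNReal.ofReal_lt_top
  haveI : IsFiniteMeasure m := by rw [hm_def]; infer_instance
  -- pushforward bound for σk
  have hmaple : ∀ k, Measure.map (σkb k) μT ≤ volume.restrict (Icc (0:ℝ) S) := by
    intro k
    refine clock_aux_map_le T S hS.le (σkb k) (hσkb_meas k) ?_ ?_ ?_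
    · intro t ht
      rw [hσkb_eq k t ht]
      exact hσkmaps k ht
    · intro u hu
      obtain ⟨t, ht, heq⟩ := hσksurj k hu
      exact ⟨t, ht, by rw [hσkb_eq k t ht]; exact heq⟩
    · intro t₁ h₁ t₂ h₂ h12
      rw [hσkb_eq k t₁ h₁, hσkb_eq k t₂ h₂]
      exact hexpk k t₁ h₁ t₂ h₂ h12
  -- interval integral rewriting
  have hio : volume.restrict (Ioc (0:ℝ) T) = μT := Measure.restrict_congr_set Ioc_ae_eq_Icc
  have hioS : volume.restrict (Ioc (0:ℝ) S) = volume.restrict (Icc (0:ℝ) S) :=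
    Measure.restrict_congr_set Ioc_ae_eq_Icc
  set F : ℕ → ℝ := fun k => ∫ t in (0:ℝ)..T, ‖ψ (σk k t) - ψ (σ t)‖ with hF_def
  have hFeq : ∀ k, F k = ∫ t, ‖ψ (σkb k t) - ψ (σb t)‖ ∂μT := by
    intro k
    simp only [hF_def]
    rw [intervalIntegral.integral_of_le hT.le]
    have hcong : ∀ t ∈ Ioc (0:ℝ) T, ‖ψ (σk k t) - ψ (σ t)‖ = ‖ψ (σkb k t) - ψ (σb t)‖ := by
      intro t ht
      rw [hσkb_eq k t (Ioc_subset_Icc_self ht), hσb_eq t (Ioc_subset_Icc_self ht)]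
    rw [setIntegral_congr_fun measurableSet_Ioc hcong, ← hio]
  have hF_nonneg : ∀ k, 0 ≤ F k := by
    intro k
    simp only [hF_def]
    exact intervalIntegral.integral_nonneg hT.le (fun t _ => norm_nonneg _)
  -- main approximation step
  have key : ∀ ε > (0:ℝ), ∃ w : ℝ → EuclideanSpace ℝ (Fin l), Continuous w ∧
      (∃ C, ∀ s, ‖w s‖ ≤ C) ∧
      (∫ s in (0:ℝ)..S, ‖w s - ψ s‖) < ε ∧
      Filter.limsup F atTop ≤ 2 * ε := by
    intro ε hε
    have hψint : Integrable ψ m :=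
      (integrable_const Cb).mono' hψm.aestronglyMeasurable (ae_of_all _ hψb)
    obtain ⟨w, hwsupp, hwL1, hwcont, hwint_m⟩ :=
      hψint.exists_hasCompactSupport_integral_sub_le (half_pos hε)
    obtain ⟨Cw, hCw⟩ := hwsupp.exists_bound_of_continuous hwcont
    set d : ℝ → ℝ := fun x => ‖ψ x - w x‖ with hd_def
    have hd_meas : Measurable d := (hψm.sub hwcont.measurable).norm
    have hd_nonneg : ∀ x, 0 ≤ d x := fun x => norm_nonneg _
    have hd_bdd : ∀ x, d x ≤ Cb + Cw :=
      fun x => (norm_sub_le _ _).trans (add_le_add (hψb x) (hCw x))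
    have hd_int : ∀ (ρ : Measure ℝ), IsFiniteMeasure ρ → Integrable d ρ := by
      intro ρ hρ
      exact (integrable_const (Cb + Cw)).mono' hd_meas.aestronglyMeasurable
        (ae_of_all _ fun x => by
          rw [Real.norm_eq_abs, abs_of_nonneg (hd_nonneg x)]; exact hd_bdd x)
    set q : ℝ := (∫ x, d x ∂(volume.restrict (Icc (0:ℝ) S))) + ∫ x, d x ∂ν with hq_def
    have hqle : q ≤ ε / 2 := by
      have h := integral_add_measure (μ := volume.restrict (Icc (0:ℝ) S)) (ν := ν)
        (hd_int _ inferInstance) (hd_int _ hνfin)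
      rw [hq_def, ← h]
      exact hwL1
    -- first bullet
    have hb1 : (∫ s in (0:ℝ)..S, ‖w s - ψ s‖) < ε := by
      have h1 : (∫ s in (0:ℝ)..S, ‖w s - ψ s‖) = ∫ x, d x ∂(volume.restrict (Icc (0:ℝ) S)) := by
        rw [intervalIntegral.integral_of_le hS.le]
        have hcong : ∀ s ∈ Ioc (0:ℝ) S, ‖w s - ψ s‖ = d s := by
          intro s _
          rw [hd_def]
          exact norm_sub_rev _ _
        rw [setIntegral_congr_fun measurableSet_Ioc hcong, ← hioS]
      rw [h1]
      have h2 : 0 ≤ ∫ x, d x ∂ν := integral_nonneg hd_nonneg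
      have h3 : (∫ x, d x ∂(volume.restrict (Icc (0:ℝ) S))) ≤ q := by
        rw [hq_def]; linarith
      linarith [hqle]
    -- the middle term
    set B : ℕ → ℝ := fun k => ∫ t, ‖w (σkb k t) - w (σb t)‖ ∂μT with hB_def
    have hB0 : Tendsto B atTop (𝓝 0) := by
      have h := tendsto_integral_of_dominated_convergence (μ := μT)
        (F := fun k t => ‖w (σkb k t) - w (σb t)‖) (f := fun _ => (0:ℝ))
        (bound := fun _ => Cw + Cw)
        (fun k => (((hwcont.measurable.comp (hσkb_meas k)).sub
          (hwcont.measurable.comp hσb_meas)).norm).aestronglyMeasurable)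
        (integrable_const _)
        (fun k => ae_of_all _ fun t => by
          rw [Real.norm_eq_abs, abs_of_nonneg (norm_nonneg _)]
          exact (norm_sub_le _ _).trans (add_le_add (hCw _) (hCw _)))
        ?_
      · simpa using h
      · have hmem : ∀ᵐ t ∂μT, t ∈ Icc (0:ℝ) T := ae_restrict_mem measurableSet_Icc
        filter_upwards [hmem] with t ht
        have h1 : Tendsto (fun k => σk k t) atTop (𝓝 (σ t)) := hconv t ht
        have h2 : Tendsto (fun k => w (σk k t)) atTop (𝓝 (w (σ t))) :=
          (hwcont.tendsto (σ t)).comp h1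
        have h3 : Tendsto (fun k => ‖w (σk k t) - w (σ t)‖) atTop (𝓝 0) := by
          have := (h2.sub (tendsto_const_nhds (x := w (σ t)))).norm
          simpa using this
        have h4 : ∀ k, ‖w (σkb k t) - w (σb t)‖ = ‖w (σk k t) - w (σ t)‖ := by
          intro k
          rw [hσkb_eq k t ht, hσb_eq t ht]
        simpa only [h4] using h3
    -- three-term bound
    have hFle : ∀ k, F k ≤ q + B k := by
      intro k
      rw [hFeq k]
      have hpt : ∀ t, ‖ψ (σkb k t) - ψ (σb t)‖ ≤
          d (σkb k t) + ‖w (σkb k t) - w (σb t)‖ + d (σb t) := by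
        intro t
        have he : ψ (σkb k t) - ψ (σb t) =
            (ψ (σkb k t) - w (σkb k t)) + (w (σkb k t) - w (σb t))
              + (w (σb t) - ψ (σb t)) := by abel
        rw [he]
        refine (norm_add_le _ _).trans ?_
        have := norm_add_le (ψ (σkb k t) - w (σkb k t)) (w (σkb k t) - w (σb t))
        have h5 : ‖w (σb t) - ψ (σb t)‖ = d (σb t) := norm_sub_rev _ _
        simp only [hd_def] at *
        linarith
      have hint1 : Integrable (fun t => ‖ψ (σkb k t) - ψ (σb t)‖) μT := by
        refine (integrable_const (Cb + Cb)).mono'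
          (((hψm.comp (hσkb_meas k)).sub (hψm.comp hσb_meas)).norm).aestronglyMeasurable
          (ae_of_all _ fun t => ?_)
        rw [Real.norm_eq_abs, abs_of_nonneg (norm_nonneg _)]
        exact (norm_sub_le _ _).trans (add_le_add (hψb _) (hψb _))
      have hintd1 : Integrable (fun t => d (σkb k t)) μT := by
        refine (integrable_const (Cb + Cw)).mono'
          ((hd_meas.comp (hσkb_meas k)).aestronglyMeasurable)
          (ae_of_all _ fun t => ?_)
        rw [Real.norm_eq_abs, abs_of_nonneg (hd_nonneg _)]
        exact hd_bdd _
      have hintd2 : Integrable (fun t => d (σb t)) μT := by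
        refine (integrable_const (Cb + Cw)).mono'
          ((hd_meas.comp hσb_meas).aestronglyMeasurable)
          (ae_of_all _ fun t => ?_)
        rw [Real.norm_eq_abs, abs_of_nonneg (hd_nonneg _)]
        exact hd_bdd _
      have hintmid : Integrable (fun t => ‖w (σkb k t) - w (σb t)‖) μT := by
        refine (integrable_const (Cw + Cw)).mono'
          ((((hwcont.measurable.comp (hσkb_meas k)).sub
            (hwcont.measurable.comp hσb_meas)).norm).aestronglyMeasurable)
          (ae_of_all _ fun t => ?_)
        rw [Real.norm_eq_abs, abs_of_nonneg (norm_nonneg _)]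
        exact (norm_sub_le _ _).trans (add_le_add (hCw _) (hCw _))
      have hmono1 : (∫ t, ‖ψ (σkb k t) - ψ (σb t)‖ ∂μT) ≤
          ∫ t, (d (σkb k t) + ‖w (σkb k t) - w (σb t)‖ + d (σb t)) ∂μT :=
        integral_mono hint1 ((hintd1.add hintmid).add hintd2) hpt
      have hsplit : (∫ t, (d (σkb k t) + ‖w (σkb k t) - w (σb t)‖ + d (σb t)) ∂μT) =
          (∫ t, d (σkb k t) ∂μT) + (∫ t, ‖w (σkb k t) - w (σb t)‖ ∂μT)
            + ∫ t, d (σb t) ∂μT := by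
        have e1 := integral_add (μ := μT) (hintd1.add hintmid) hintd2
        have e2 := integral_add (μ := μT) hintd1 hintmid
        simp only [Pi.add_apply] at e1
        rw [e1, e2]
      have hch1 : (∫ t, d (σkb k t) ∂μT) ≤ ∫ x, d x ∂(volume.restrict (Icc (0:ℝ) S)) := by
        have : (∫ t, d (σkb k t) ∂μT) = ∫ x, d x ∂(Measure.map (σkb k) μT) :=
          (integral_map (hσkb_meas k).aemeasurable hd_meas.aestronglyMeasurable).symm
        rw [this]
        exact integral_mono_measure (hmaple k) (ae_of_all _ hd_nonneg)
          (hd_int _ inferInstance)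
      have hch2 : (∫ t, d (σb t) ∂μT) = ∫ x, d x ∂ν := by
        rw [hν_def]
        exact (integral_map hσb_meas.aemeasurable hd_meas.aestronglyMeasurable).symm
      simp only [hq_def, hB_def]
      calc (∫ t, ‖ψ (σkb k t) - ψ (σb t)‖ ∂μT)
          ≤ (∫ t, d (σkb k t) ∂μT) + (∫ t, ‖w (σkb k t) - w (σb t)‖ ∂μT)
            + ∫ t, d (σb t) ∂μT := by rw [← hsplit]; exact hmono1
        _ ≤ _ := by rw [hch2]; have := hch1; linarith
    -- limsup bound
    have hg1 : Tendsto (fun k => q + B k) atTop (𝓝 q) := by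
      have := tendsto_const_nhds (x := q) (f := atTop (α := ℕ)) |>.add hB0
      simpa using this
    have hls : limsup F atTop ≤ q := by
      have h1 : limsup F atTop ≤ limsup (fun k => q + B k) atTop :=
        limsup_le_limsup (Eventually.of_forall hFle)
          (isCoboundedUnder_le_of_le atTop hF_nonneg)
          (hg1.isBoundedUnder_le)
      rwa [hg1.limsup_eq] at h1
    exact ⟨w, hwcont, ⟨Cw, hCw⟩, hb1, by linarith⟩
  refine ⟨key, ?_⟩
  -- conclude convergence
  have hub : ∀ k, F k ≤ (Cb + Cb) * T := by
    intro k
    have hFik : IntervalIntegrable (fun t => ‖ψ (σk k t) - ψ (σ t)‖) volume 0 T := by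
      rw [intervalIntegrable_iff_integrableOn_Ioc_of_le hT.le]
      have hmeas : Integrable (fun t => ‖ψ (σkb k t) - ψ (σb t)‖)
          (volume.restrict (Ioc (0:ℝ) T)) := by
        rw [hio]
        refine (integrable_const (Cb + Cb)).mono'
          (((hψm.comp (hσkb_meas k)).sub (hψm.comp hσb_meas)).norm).aestronglyMeasurable
          (ae_of_all _ fun t => ?_)
        rw [Real.norm_eq_abs, abs_of_nonneg (norm_nonneg _)]
        exact (norm_sub_le _ _).trans (add_le_add (hψb _) (hψb _))
      refine hmeas.congr ?_
      refine (ae_restrict_iff' measurableSet_Ioc).2 (ae_of_all _ fun t ht => ?_)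
      show ‖ψ (σkb k t) - ψ (σb t)‖ = ‖ψ (σk k t) - ψ (σ t)‖
      rw [hσkb_eq k t (Ioc_subset_Icc_self ht), hσb_eq t (Ioc_subset_Icc_self ht)]
    have := intervalIntegral.integral_mono_on hT.le hFik
      (intervalIntegrable_const (c := Cb + Cb))
      (fun t _ => (norm_sub_le _ _).trans (add_le_add (hψb _) (hψb _)))
    simp only [hF_def]
    refine le_trans this (le_of_eq ?_)
    rw [intervalIntegral.integral_const]
    simp only [smul_eq_mul]
    ring
  have hlimsup_le : limsup F atTop ≤ 0 := by
    refine le_of_forall_pos_le_add (fun ε hε => ?_)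
    obtain ⟨w, _, _, _, h⟩ := key (ε / 2) (half_pos hε)
    rw [zero_add]
    linarith
  have hliminf_ge : (0:ℝ) ≤ liminf F atTop :=
    le_liminf_of_le (isCoboundedUnder_ge_of_le atTop hub) (Eventually.of_forall hF_nonneg)
  exact tendsto_of_le_liminf_of_limsup_le hliminf_ge hlimsup_le
    ⟨(Cb + Cb) * T, eventually_map.2 (Eventually.of_forall hub)⟩
    ⟨0, eventually_map.2 (Eventually.of_forall hF_nonneg)⟩
end

section
/- Let x : [0,T] → ℝ^n be absolutely continuous with |ẋ(t)| ≤ M(1 + |x(t)| + |u(t)|)(1 + |u̇(t)|) a.e., where u : [0,T] → U is absolutely continuous with values in a compact set U having the Whitney property with constant C ≥ 1. Fix τ ∈ [0,T) and a target point ū ∈ U. Define ǔ(t) = u(t) for t ∈ [0,τ) and ǔ(t) = ũ((t−τ)/(T−τ)) for t ∈ (τ, T], where ũ : [0,1] → U is an absolutely continuous path from u(τ) to ū with Var(ũ) ≤ C|u(τ) − ū|. Then ǔ is absolutely continuous on [0,T] with Var_{[0,T]}(ǔ) ≤ Var_{[0,τ]}(u) + C|u(τ) − ū|, and any solution x̌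 of the same differential inequality with input ǔ agreeing with x at τ satisfies |x̌(T) − x̌(τ)| ≤ M(1 + sup_{[τ,T]}(|x̌| + |ǔ|))·(T − τ + C|u(τ) − ū|). -/
/-!
The patched input is a primitive of `du` on `[0, τ]` and of `dupatch` on `[τ, T]`, so gluing the
two integrands shows that it is absolutely continuous; its variation splits at `τ`, and on
`[τ, T]` it is an affine reparametrisation of the Whitney path. For the drift, bounding
`‖xpatch‖ + ‖upatch‖` by its supremum `S` over `[τ, T]` and integrating the differential inequality
gives `‖xpatch T - xpatch τ‖ ≤ M (1 + S) (T - τ + ∫ ‖dupatch‖)`. The remaining point is that the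
integral of the norm of the derivative of an absolutely continuous `f` is at most its variation:
a.e. `‖f'‖` is bounded by the derivative of the monotone function `t ↦ Var_{[a,t]} f`, and the
derivative of a monotone function integrates to at most its increment.
-/

open Set MeasureTheory Filter Topology

theorem eVariationOn_le_of_dist_le_sub {α E : Type*} [LinearOrder α] [PseudoMetricSpace E]
    {f : α → E} {G : α → ℝ} {s : Set α}
    (h : ∀ x ∈ s, ∀ y ∈ s, x ≤ y → dist (f x) (f y) ≤ G y - G x) :
    eVariationOn f s ≤ eVariationOn G s :=
  iSup_mono fun p => Finset.sum_le_sum fun i _ => by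
    obtain ⟨u, hu, hus⟩ := p.2
    rw [edist_dist, edist_dist, dist_comm]
    exact ENNReal.ofReal_le_ofReal <|
      (h _ (hus i) _ (hus (i + 1)) (hu i.le_succ)).trans (Real.dist_eq _ _ ▸ le_abs_self _)

theorem dist_le_sub_variationOnFromTo {α E : Type*} [LinearOrder α] [PseudoMetricSpace E]
    {f : α → E} {s : Set α} (hf : LocallyBoundedVariationOn f s) {a x y : α} (ha : a ∈ s)
    (hx : x ∈ s) (hy : y ∈ s) (hxy : x ≤ y) :
    dist (f x) (f y) ≤ variationOnFromTo f s a y - variationOnFromTo f s a x := by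
  rw [← variationOnFromTo.add hf ha hx hy, add_sub_cancel_left,
    variationOnFromTo.eq_of_le f s hxy]
  exact (hf x y hx hy).dist_le ⟨hx, le_rfl, hxy⟩ ⟨hy, hxy, le_rfl⟩

theorem eVariationOn_Icc_eq_of_rescale {F : Type*} [PseudoEMetricSpace F] {f g : ℝ → F}
    {a b : ℝ} (hab : a < b) (hfg : ∀ t ∈ Icc a b, f t = g ((t - a) / (b - a))) :
    eVariationOn f (Icc a b) = eVariationOn g (Icc 0 1) := by
  have hba : 0 < b - a := sub_pos.2 hab
  set ψ : ℝ → ℝ := fun r => (b - a) * r + a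
  have himage : ψ '' Icc 0 1 = Icc a b := by simp [ψ, image_affine_Icc' hba]
  have hψ : MonotoneOn ψ (Icc 0 1) := fun r _ s _ hrs => by simp only [ψ]; gcongr
  rw [← himage, ← eVariationOn.comp_eq_of_monotoneOn f ψ hψ]
  refine eVariationOn.eq_of_eqOn fun r hr => ?_
  rw [Function.comp_apply, hfg _ (himage ▸ mem_image_of_mem ψ hr)]
  congr 1
  field_simp
  ring

section Primitive

variable {E : Type*} [NormedAddCommGroup E] [NormedSpace ℝ E] {f h : ℝ → E} {a b : ℝ}

theorem norm_le_of_hasDerivAt_of_norm_sub_le {g : ℝ → ℝ} {f' : E} {g' x : ℝ}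
    (hf : HasDerivAt f f' x) (hg : HasDerivAt g g' x)
    (hfg : ∀ᶠ y in 𝓝[>] x, ‖f y - f x‖ ≤ g y - g x) : ‖f'‖ ≤ g' := by
  have hf' : Tendsto (slope f x) (𝓝[>] x) (𝓝 f') := by
    simpa using hasDerivWithinAt_iff_tendsto_slope.1 (hf.hasDerivWithinAt (s := Ioi x))
  have hg' : Tendsto (slope g x) (𝓝[>] x) (𝓝 g') := by
    simpa using hasDerivWithinAt_iff_tendsto_slope.1 (hg.hasDerivWithinAt (s := Ioi x))
  refine le_of_tendsto_of_tendsto hf'.norm hg' ?_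
  filter_upwards [hfg, self_mem_nhdsWithin] with y hy hxy
  have hinv : 0 ≤ (y - x)⁻¹ := inv_nonneg.2 (sub_nonneg.2 (le_of_lt hxy))
  rw [slope_def_module, slope_def_field, norm_smul, Real.norm_of_nonneg hinv, div_eq_inv_mul]
  exact mul_le_mul_of_nonneg_left hy hinv

theorem sub_eq_integral_of_eq_add_integral (hi : IntervalIntegrable h volume a b)
    (hf : ∀ t ∈ Icc a b, f t = f a + ∫ s in a..t, h s) {x y : ℝ} (hx : x ∈ Icc a b)
    (hy : y ∈ Icc a b) : f y - f x = ∫ s in x..y, h s := by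
  have hsub : ∀ t ∈ Icc a b, IntervalIntegrable h volume a t := fun t ht =>
    hi.mono_set (uIcc_subset_uIcc left_mem_uIcc (Icc_subset_uIcc ht))
  rw [hf y hy, hf x hx, ← intervalIntegral.integral_interval_sub_left (hsub y hy) (hsub x hx)]
  abel

theorem dist_le_integral_norm_of_eq_add_integral (hi : IntervalIntegrable h volume a b)
    (hf : ∀ t ∈ Icc a b, f t = f a + ∫ s in a..t, h s) {x y : ℝ} (hx : x ∈ Icc a b)
    (hy : y ∈ Icc a b) (hxy : x ≤ y) : dist (f x) (f y) ≤ ∫ s in x..y, ‖h s‖ := by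
  rw [dist_comm, dist_eq_norm, sub_eq_integral_of_eq_add_integral hi hf hx hy]
  exact intervalIntegral.norm_integral_le_integral_norm hxy

theorem continuousOn_of_eq_add_integral (hi : IntervalIntegrable h volume a b)
    (hf : ∀ t ∈ Icc a b, f t = f a + ∫ s in a..t, h s) : ContinuousOn f (Icc a b) :=
  (((intervalIntegral.continuousOn_primitive_interval' hi left_mem_uIcc).const_add (f a)).mono
    Icc_subset_uIcc).congr hf

theorem eVariationOn_le_integral_norm (hab : a ≤ b) (hi : IntervalIntegrable h volume a b)
    (hf : ∀ t ∈ Icc a b, f t = f a + ∫ s in a..t, h s) :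
    eVariationOn f (Icc a b) ≤ ENNReal.ofReal (∫ s in a..b, ‖h s‖) := by
  set G : ℝ → ℝ := fun t => ∫ s in a..t, ‖h s‖
  have hG : ∀ t ∈ Icc a b, G t = G a + ∫ s in a..t, ‖h s‖ := by simp [G]
  have hdist : ∀ x ∈ Icc a b, ∀ y ∈ Icc a b, x ≤ y → dist (f x) (f y) ≤ G y - G x :=
    fun x hx y hy hxy => by
      rw [sub_eq_integral_of_eq_add_integral hi.norm hG hx hy]
      exact dist_le_integral_norm_of_eq_add_integral hi hf hx hy hxy
  have hmono : MonotoneOn G (Icc a b) := fun x hx y hy hxy =>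
    sub_nonneg.1 (dist_nonneg.trans (hdist x hx y hy hxy))
  calc eVariationOn f (Icc a b) ≤ eVariationOn G (Icc a b) := eVariationOn_le_of_dist_le_sub hdist
    _ = ENNReal.ofReal (G b - G a) := by
      simpa using hmono.eVariationOn_eq (left_mem_Icc.2 hab) (right_mem_Icc.2 hab)
    _ = ENNReal.ofReal (∫ s in a..b, ‖h s‖) := by simp [G]

theorem boundedVariationOn_of_eq_add_integral (hab : a ≤ b) (hi : IntervalIntegrable h volume a b)
    (hf : ∀ t ∈ Icc a b, f t = f a + ∫ s in a..t, h s) : BoundedVariationOn f (Icc a b) :=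
  ((eVariationOn_le_integral_norm hab hi hf).trans_lt ENNReal.ofReal_lt_top).ne

theorem integral_norm_le_toReal_eVariationOn [CompleteSpace E] (hab : a ≤ b)
    (hi : IntervalIntegrable h volume a b) (hf : ∀ t ∈ Icc a b, f t = f a + ∫ s in a..t, h s) :
    ∫ s in a..b, ‖h s‖ ≤ (eVariationOn f (Icc a b)).toReal := by
  have hbv := (boundedVariationOn_of_eq_add_integral hab hi hf).locallyBoundedVariationOn
  have ha : a ∈ Icc a b := left_mem_Icc.2 hab
  set g := variationOnFromTo f (Icc a b) a
  have hg : MonotoneOn g (uIcc a b) := uIcc_of_le hab ▸ variationOnFromTo.monotoneOn hbv ha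
  have hderiv : ∀ᵐ t, t ∈ Ioo a b → ‖h t‖ ≤ deriv g t := by
    filter_upwards [hi.ae_hasDerivAt_integral, hg.ae_differentiableWithinAt_of_mem]
      with t hfderiv hgderiv ht
    have hnhds : Icc a b ∈ 𝓝 t := Icc_mem_nhds ht.1 ht.2
    have htI : t ∈ uIcc a b := Icc_subset_uIcc (Ioo_subset_Icc_self ht)
    refine norm_le_of_hasDerivAt_of_norm_sub_le (f := f) ?_
      ((hgderiv htI).differentiableAt (uIcc_of_le hab ▸ hnhds)).hasDerivAt ?_
    · refine ((hfderiv htI a left_mem_uIcc).const_add (f a)).congr_of_eventuallyEq ?_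
      filter_upwards [hnhds] with y hy using hf y hy
    · filter_upwards [nhdsWithin_le_nhds hnhds, self_mem_nhdsWithin] with y hy hty
      rw [← dist_eq_norm, dist_comm]
      exact dist_le_sub_variationOnFromTo hbv ha (Ioo_subset_Icc_self ht) hy (le_of_lt hty)
  calc ∫ s in a..b, ‖h s‖ ≤ ∫ s in a..b, deriv g s := by
        refine intervalIntegral.integral_mono_ae_restrict hab hi.norm hg.intervalIntegrable_deriv ?_
        rw [← restrict_Ioo_eq_restrict_Icc]
        exact (ae_restrict_iff' measurableSet_Ioo).2 hderiv
    _ ≤ g b - g a := (uIcc_of_le (sub_nonneg.2 (hg left_mem_uIcc right_mem_uIcc hab)) ▸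
          hg.intervalIntegral_deriv_mem_uIcc).2
    _ = (eVariationOn f (Icc a b)).toReal := by
        simp [g, variationOnFromTo.self, variationOnFromTo.eq_of_le f _ hab]

theorem norm_sub_le_mul_integral_of_ae_norm_le {ρ : ℝ → ℝ} {K : ℝ} (hab : a ≤ b)
    (hi : IntervalIntegrable h volume a b) (hf : ∀ t ∈ Icc a b, f t = f a + ∫ s in a..t, h s)
    (hρ : IntervalIntegrable ρ volume a b)
    (hbound : ∀ᵐ t ∂volume.restrict (Icc a b), ‖h t‖ ≤ K * ρ t) :
    ‖f b - f a‖ ≤ K * ∫ s in a..b, ρ s := by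
  rw [sub_eq_integral_of_eq_add_integral hi hf (left_mem_Icc.2 hab) (right_mem_Icc.2 hab),
    ← intervalIntegral.integral_const_mul]
  exact (intervalIntegral.norm_integral_le_integral_norm hab).trans
    (intervalIntegral.integral_mono_ae_restrict hab hi.norm (hρ.const_mul K) hbound)

theorem absCont_of_adjacent {k : ℝ → E} {c : ℝ} (hab : a ≤ b) (hbc : b ≤ c)
    (hh : IntervalIntegrable h volume a b) (hfh : ∀ t ∈ Icc a b, f t = f a + ∫ s in a..t, h s)
    (hk : IntervalIntegrable k volume b c) (hfk : ∀ t ∈ Icc b c, f t = f b + ∫ s in b..t, k s) :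
    AbsCont f a c := by
  set φ : ℝ → E := fun s => if s ≤ b then h s else k s
  have hφh {t : ℝ} (hat : a ≤ t) (htb : t ≤ b) : EqOn h φ (uIcc a t) := fun s hs => by
    simp [φ, ((uIcc_of_le hat ▸ hs).2.trans htb)]
  have hφk {t : ℝ} (hbt : b ≤ t) : EqOn k φ (uIoc b t) := fun s hs => by
    simp [φ, not_le.2 (uIoc_of_le hbt ▸ hs).1]
  have hφab : IntervalIntegrable φ volume a b :=
    hh.congr ((hφh hab le_rfl).mono uIoc_subset_uIcc)
  refine ⟨φ, hφab.trans (hk.congr (hφk hbc)), fun t ht => ?_⟩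
  rcases le_total t b with htb | hbt
  · rw [hfh t ⟨ht.1, htb⟩, intervalIntegral.integral_congr (hφh ht.1 htb)]
  · have hφbt : IntervalIntegrable φ volume b t :=
      (hk.mono_set (uIcc_subset_uIcc left_mem_uIcc (Icc_subset_uIcc ⟨hbt, ht.2⟩))).congr
        (hφk hbt)
    rw [hfk t ⟨hbt, ht.2⟩, hfh b ⟨hab, le_rfl⟩, intervalIntegral.integral_congr (hφh hab le_rfl),
      ← intervalIntegral.integral_add_adjacent_intervals hφab hφbt,
      intervalIntegral.integral_congr_ae (ae_of_all _ fun s hs => hφk hbt hs), add_assoc]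

theorem norm_sub_le_of_ae_norm_le_growth {F : Type*} [NormedAddCommGroup F] [NormedSpace ℝ F]
    {w dw : ℝ → F} {M V : ℝ} (hM : 0 ≤ M) (hab : a ≤ b) (hi : IntervalIntegrable h volume a b)
    (hf : ∀ t ∈ Icc a b, f t = f a + ∫ s in a..t, h s) (hdw : IntervalIntegrable dw volume a b)
    (hw : ∀ t ∈ Icc a b, w t = w a + ∫ s in a..t, dw s)
    (hgrowth : ∀ᵐ t ∂volume.restrict (Icc a b),
      ‖h t‖ ≤ M * (1 + ‖f t‖ + ‖w t‖) * (1 + ‖dw t‖))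
    (hV : ∫ s in a..b, ‖dw s‖ ≤ V) :
    ‖f b - f a‖ ≤ M * (1 + sSup ((fun t => ‖f t‖ + ‖w t‖) '' Icc a b)) * (b - a + V) := by
  set S := sSup ((fun t => ‖f t‖ + ‖w t‖) '' Icc a b)
  have hS : ∀ t ∈ Icc a b, ‖f t‖ + ‖w t‖ ≤ S := fun t ht =>
    le_csSup (isCompact_Icc.bddAbove_image
      ((continuousOn_of_eq_add_integral hi hf).norm.add
        (continuousOn_of_eq_add_integral hdw hw).norm)) ⟨t, ht, rfl⟩
  have hS0 : 0 ≤ S := Real.sSup_nonneg (by rintro _ ⟨t, -, rfl⟩; positivity)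
  calc ‖f b - f a‖ ≤ M * (1 + S) * ∫ s in a..b, (1 + ‖dw s‖) := by
        refine norm_sub_le_mul_integral_of_ae_norm_le hab hi hf
          (intervalIntegrable_const.add hdw.norm) ?_
        filter_upwards [hgrowth, ae_restrict_mem measurableSet_Icc] with t ht htI
        refine ht.trans ?_
        gcongr M * ?_ * _
        linarith [hS t htI]
    _ = M * (1 + S) * (b - a + ∫ s in a..b, ‖dw s‖) := by
        rw [intervalIntegral.integral_add intervalIntegrable_const hdw.norm,
          intervalIntegral.integral_const, smul_eq_mul, mul_one]
    _ ≤ M * (1 + S) * (b - a + V) := by gcongr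

end Primitive

theorem whitney_patching_general {m n : ℕ} (T τ M C : ℝ) (hτ : 0 ≤ τ)
    (hτT : τ < T) (hM : 0 < M)
    (u du : ℝ → EuclideanSpace ℝ (Fin m))
    (hdui : IntervalIntegrable du volume 0 T)
    (hu : ∀ t ∈ Icc (0:ℝ) T, u t = u 0 + ∫ s in (0:ℝ)..t, du s)
    (ubar : EuclideanSpace ℝ (Fin m))
    (upath : ℝ → EuclideanSpace ℝ (Fin m))
    (hupath0 : upath 0 = u τ)
    (hupathvar : (eVariationOn upath (Icc 0 1)).toReal ≤ C * ‖u τ - ubar‖)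
    (upatch : ℝ → EuclideanSpace ℝ (Fin m))
    (hupatch1 : ∀ t ∈ Icc (0:ℝ) τ, upatch t = u t)
    (hupatch2 : ∀ t ∈ Ioc τ T, upatch t = upath ((t - τ) / (T - τ)))
    (xpatch dxpatch : ℝ → EuclideanSpace ℝ (Fin n))
    (dupatch : ℝ → EuclideanSpace ℝ (Fin m))
    (hdupatchi : IntervalIntegrable dupatch volume τ T)
    (hupatchint : ∀ t ∈ Icc τ T, upatch t = upatch τ + ∫ s in τ..t, dupatch s)
    (hdxpatchi : IntervalIntegrable dxpatch volume τ T)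
    (hxpatch : ∀ t ∈ Icc τ T, xpatch t = xpatch τ + ∫ s in τ..t, dxpatch s)
    (hineq : ∀ᵐ t ∂(volume.restrict (Icc τ T)),
      ‖dxpatch t‖ ≤ M * (1 + ‖xpatch t‖ + ‖upatch t‖) * (1 + ‖dupatch t‖)) :
    AbsCont upatch 0 T ∧
    (eVariationOn upatch (Icc 0 T)).toReal ≤
      (eVariationOn u (Icc 0 τ)).toReal + C * ‖u τ - ubar‖ ∧
    ‖xpatch T - xpatch τ‖ ≤ M * (1 + sSup ((fun t => ‖xpatch t‖ + ‖upatch t‖) '' Icc τ T)) *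
      (T - τ + C * ‖u τ - ubar‖) := by
  have hdu : IntervalIntegrable du volume 0 τ :=
    hdui.mono_set (uIcc_subset_uIcc left_mem_uIcc (Icc_subset_uIcc ⟨hτ, hτT.le⟩))
  have hu' : ∀ t ∈ Icc 0 τ, u t = u 0 + ∫ s in (0:ℝ)..t, du s :=
    fun t ht => hu t ⟨ht.1, ht.2.trans hτT.le⟩
  have hupatch0 : ∀ t ∈ Icc 0 τ, upatch t = upatch 0 + ∫ s in (0:ℝ)..t, du s := fun t ht => by
    rw [hupatch1 t ht, hupatch1 0 ⟨le_rfl, hτ⟩, hu' t ht]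
  have hpath : eVariationOn upatch (Icc τ T) = eVariationOn upath (Icc 0 1) := by
    refine eVariationOn_Icc_eq_of_rescale hτT fun t ht => ?_
    rcases ht.1.eq_or_lt with rfl | hτt
    · rw [sub_self, zero_div, hupath0, hupatch1 τ ⟨hτ, le_rfl⟩]
    · exact hupatch2 t ⟨hτt, ht.2⟩
  have hdupatch : ∫ s in τ..T, ‖dupatch s‖ ≤ C * ‖u τ - ubar‖ :=
    (integral_norm_le_toReal_eVariationOn hτT.le hdupatchi hupatchint).trans (hpath ▸ hupathvar)
  refine ⟨absCont_of_adjacent hτ hτT.le hdu hupatch0 hdupatchi hupatchint, ?_, ?_⟩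
  · have hsplit := eVariationOn.Icc_add_Icc upatch hτ hτT.le (mem_univ τ)
    simp only [univ_inter] at hsplit
    rw [← hsplit, eVariationOn.eq_of_eqOn hupatch1, hpath, ENNReal.toReal_add
      (boundedVariationOn_of_eq_add_integral hτ hdu hu') (hpath ▸
        boundedVariationOn_of_eq_add_integral hτT.le hdupatchi hupatchint)]
    gcongr
  · exact norm_sub_le_of_ae_norm_le_growth hM.le hτT.le hdxpatchi hxpatch hdupatchi hupatchint
      hineq hdupatch

/-- Whitney patching construction: appending to `u|_{[0,τ]}` a Whitney path `upath` from
`u(τ)` to `ubar` (rescaled to `[τ,T]`) yields an absolutely continuous control `upatch` with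
`Var_{[0,T]}(upatch) ≤ Var_{[0,τ]}(u) + C|u(τ) - ubar|`, and any solution `xpatch` of the
differential inequality driven by `upatch` agreeing with `x` at `τ` satisfies
`|xpatch(T) - xpatch(τ)| ≤ M(1 + sup_{[τ,T]}(|xpatch| + |upatch|))(T - τ + C|u(τ) - ubar|)`. -/
theorem whitney_patching {m n : ℕ} (T τ M C : ℝ) (hT : 0 < T) (hτ : 0 ≤ τ)
    (hτT : τ < T) (hM : 0 < M) (hC : 1 ≤ C)
    (U : Set (EuclideanSpace ℝ (Fin m)))
    (u du : ℝ → EuclideanSpace ℝ (Fin m))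
    (hdui : IntervalIntegrable du volume 0 T)
    (hu : ∀ t ∈ Icc (0:ℝ) T, u t = u 0 + ∫ s in (0:ℝ)..t, du s)
    (hUu : ∀ t ∈ Icc (0:ℝ) T, u t ∈ U)
    (x dx : ℝ → EuclideanSpace ℝ (Fin n))
    (hdxi : IntervalIntegrable dx volume 0 T)
    (hx : ∀ t ∈ Icc (0:ℝ) T, x t = x 0 + ∫ s in (0:ℝ)..t, dx s)
    (hxineq : ∀ᵐ t ∂(volume.restrict (Icc (0:ℝ) T)),
      ‖dx t‖ ≤ M * (1 + ‖x t‖ + ‖u t‖) * (1 + ‖du t‖))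
    (ubar : EuclideanSpace ℝ (Fin m)) (hubar : ubar ∈ U)
    (upath : ℝ → EuclideanSpace ℝ (Fin m)) (hupathAC : AbsCont upath 0 1)
    (hupath0 : upath 0 = u τ) (hupath1 : upath 1 = ubar) (hupathU : ∀ r ∈ Icc (0:ℝ) 1, upath r ∈ U)
    (hupathvar : (eVariationOn upath (Icc 0 1)).toReal ≤ C * ‖u τ - ubar‖)
    (upatch : ℝ → EuclideanSpace ℝ (Fin m))
    (hupatch1 : ∀ t ∈ Icc (0:ℝ) τ, upatch t = u t)
    (hupatch2 : ∀ t ∈ Ioc τ T, upatch t = upath ((t - τ) / (T - τ)))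
    (xpatch dxpatch : ℝ → EuclideanSpace ℝ (Fin n))
    (dupatch : ℝ → EuclideanSpace ℝ (Fin m))
    (hdupatchi : IntervalIntegrable dupatch volume τ T)
    (hupatchint : ∀ t ∈ Icc τ T, upatch t = upatch τ + ∫ s in τ..t, dupatch s)
    (hdxpatchi : IntervalIntegrable dxpatch volume τ T)
    (hxpatch : ∀ t ∈ Icc τ T, xpatch t = xpatch τ + ∫ s in τ..t, dxpatch s)
    (hagree : xpatch τ = x τ)
    (hineq : ∀ᵐ t ∂(volume.restrict (Icc τ T)),
      ‖dxpatch t‖ ≤ M * (1 + ‖xpatch t‖ + ‖upatch t‖) * (1 + ‖dupatch t‖)) :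
    AbsCont upatch 0 T ∧
    (eVariationOn upatch (Icc 0 T)).toReal ≤
      (eVariationOn u (Icc 0 τ)).toReal + C * ‖u τ - ubar‖ ∧
    ‖xpatch T - xpatch τ‖ ≤ M * (1 + sSup ((fun t => ‖xpatch t‖ + ‖upatch t‖) '' Icc τ T)) *
      (T - τ + C * ‖u τ - ubar‖) :=
  whitney_patching_general T τ M C hτ hτT hM u du hdui hu ubar upath hupath0 hupathvar upatch
    hupatch1 hupatch2 xpatch dxpatch dupatch hdupatchi hupatchint hdxpatchi hxpatch hineq
end
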